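/- arXiv:1103.2085 — 2 statements merged into one kernel-verified Lean document; each statement's English description precedes it below -/
import Mathlib

section
/- Let $\Delta = \{\alpha_1,\ldots,\alpha_r\}$ be the simple roots of $B_r$ and let $\lambda$ be a dominant weight with $q = q(\lambda)$ the maximal index with $\alpha_q \in \mathrm{Supp}(\lambda)$, where $q < r$. If $\mu$ is a dominant weight with $\mu \leq \lambda$ in dominance order and $\lambda - \mu = \sum_{i=1}^r a_i \alpha_i$, then $a_q \geq a_{q+1} \geq \cdots \geq a_{r-1} \geq a_r$. -/
open scoped BigOperators Classical

namespace SpinOdd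

/-- The ambient weight space of type `B_r` in ε-coordinates. -/
abbrev Wt (r : ℕ) := Fin r → ℚ

/-- The standard basis vector `ε_i`. -/
def eps (r : ℕ) (i : Fin r) : Wt r := Pi.single i 1

/-- Simple roots of `B_r`, Bourbaki numbering (0-indexed): `α i = ε i - ε (i+1)` for
`i < r-1`, and `α (r-1) = ε (r-1)` is the short simple root. -/
def alpha (r : ℕ) (i : Fin r) : Wt r :=
  if h : (i : ℕ) + 1 < r then eps r i - eps r ⟨(i : ℕ) + 1, h⟩ else eps r i

/-- The pairing `⟨λ, αᵢ^∨⟩` with the `i`-th simple coroot. -/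
def pair (r : ℕ) (lam : Wt r) (i : Fin r) : ℚ :=
  if h : (i : ℕ) + 1 < r then lam i - lam ⟨(i : ℕ) + 1, h⟩ else 2 * lam i

/-- Dominance of a weight. -/
def IsDominant (r : ℕ) (lam : Wt r) : Prop := ∀ i : Fin r, 0 ≤ pair r lam i

/-- Membership in the weight lattice of `Spin(2r+1)`: all coordinates integers, or all
coordinates half-integers. -/
def IsWeight (r : ℕ) (lam : Wt r) : Prop :=
  (∀ i, ∃ n : ℤ, lam i = n) ∨ (∀ i, ∃ n : ℤ, lam i = n + 1/2)

/-- The set of positive roots of `B_r`. -/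
def PhiPos (r : ℕ) : Set (Wt r) :=
  {v | (∃ i j : Fin r, i < j ∧ (v = eps r i - eps r j ∨ v = eps r i + eps r j)) ∨
    ∃ i : Fin r, v = eps r i}

/-- The set of positive long roots of `B_r`. -/
def PhiPosLong (r : ℕ) : Set (Wt r) :=
  {v | ∃ i j : Fin r, i < j ∧ (v = eps r i - eps r j ∨ v = eps r i + eps r j)}

/-- The set of positive short roots of `B_r`. -/
def PhiPosShort (r : ℕ) : Set (Wt r) := {v | ∃ i : Fin r, v = eps r i}

/-- The coefficient of `α i` when `θ` (in the root lattice) is written in the basis of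
simple roots. -/
def acoeff (r : ℕ) (θ : Wt r) (i : Fin r) : ℚ := ∑ j ∈ Finset.Iic i, θ j

/-- The simple-root coefficients of `θ` as a function on `ℕ` (zero out of range). -/
def ac (r : ℕ) (θ : Wt r) (k : ℕ) : ℚ := if h : k < r then acoeff r θ ⟨k, h⟩ else 0

/-- The support over `Δ` of a root lattice element. -/
def SuppDelta (r : ℕ) (θ : Wt r) : Set (Fin r) := {i | acoeff r θ i ≠ 0}

/-- The support of a weight: the simple roots non-orthogonal to it. -/
def SuppSet (r : ℕ) (lam : Wt r) : Set (Fin r) := {i | pair r lam i ≠ 0}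

/-- `ℕΔ`, the monoid of nonnegative integral combinations of simple roots. -/
def NDelta (r : ℕ) : AddSubmonoid (Wt r) := AddSubmonoid.closure (Set.range (alpha r))

/-- The dominance order: `μ ≤ λ` iff `λ - μ ∈ ℕΔ`. -/
def domLE (r : ℕ) (mu lam : Wt r) : Prop := lam - mu ∈ NDelta r

/-- `Φ⁺(λ)`: positive roots whose support meets the support of `λ`. -/
def PhiPosLam (r : ℕ) (lam : Wt r) : Set (Wt r) :=
  {θ | θ ∈ PhiPos r ∧ (SuppDelta r θ ∩ SuppSet r lam).Nonempty}

/-- `Φ⁺_l(λ)`: positive long roots whose support meets the support of `λ`. -/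
def PhiPosLongLam (r : ℕ) (lam : Wt r) : Set (Wt r) :=
  {θ | θ ∈ PhiPosLong r ∧ (SuppDelta r θ ∩ SuppSet r lam).Nonempty}

/-- `Φ⁺_s(λ)`: positive short roots whose support meets the support of `λ`. -/
def PhiPosShortLam (r : ℕ) (lam : Wt r) : Set (Wt r) :=
  {θ | θ ∈ PhiPosShort r ∧ (SuppDelta r θ ∩ SuppSet r lam).Nonempty}

/-- Simple reflections, as linear automorphisms of the weight space. -/
noncomputable def sRefl (r : ℕ) (i : Fin r) : Wt r ≃ₗ[ℚ] Wt r :=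
  if h : (i : ℕ) + 1 < r then
    LinearEquiv.funCongrLeft ℚ ℚ (Equiv.swap i ⟨(i : ℕ) + 1, h⟩)
  else
    LinearEquiv.piCongrRight
      (fun j => if j = i then LinearEquiv.neg ℚ else LinearEquiv.refl ℚ ℚ)

/-- The Weyl group of the Levi subgroup determined by the subset `I` of simple roots:
the group generated by the corresponding simple reflections.  For `I = Set.univ` this
is the Weyl group of `Spin(2r+1)`. -/
noncomputable def WeylGp (r : ℕ) (I : Set (Fin r)) : Subgroup (Wt r ≃ₗ[ℚ] Wt r) :=
  Subgroup.closure (sRefl r '' I)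

/-- The sign (determinant) of a Weyl group element. -/
noncomputable def sgn (r : ℕ) (w : Wt r ≃ₗ[ℚ] Wt r) : ℚ := LinearMap.det w.toLinearMap

/-- The positive roots of the Levi determined by `I`. -/
def PhiPosI (r : ℕ) (I : Set (Fin r)) : Set (Wt r) := {θ | θ ∈ PhiPos r ∧ SuppDelta r θ ⊆ I}

/-- The half sum `ρ_I` of positive roots of the Levi determined by `I`. -/
noncomputable def rhoI (r : ℕ) (I : Set (Fin r)) : Wt r := (1/2 : ℚ) • ∑ᶠ θ ∈ PhiPosI r I, θ

/-- The Kostant partition function of the Levi determined by `I`. -/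
noncomputable def kostantI (r : ℕ) (I : Set (Fin r)) (β : Wt r) : ℕ :=
  Set.ncard {f : Wt r →₀ ℕ |
    (↑f.support : Set (Wt r)) ⊆ PhiPosI r I ∧ (f.sum fun v n => (n : ℚ) • v) = β}

/-- The multiplicity of the weight `μ` in the irreducible module of the Levi determined
by `I` with highest weight `λ` (Kostant's weight multiplicity formula). -/
noncomputable def wmultI (r : ℕ) (I : Set (Fin r)) (lam mu : Wt r) : ℚ :=
  ∑ᶠ w : WeylGp r I,
    sgn r (w : Wt r ≃ₗ[ℚ] Wt r) *
      (kostantI r I ((w : Wt r ≃ₗ[ℚ] Wt r) (lam + rhoI r I) - (mu + rhoI r I)) : ℚ)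

/-- The dimension of the `ν`-weight space of `V(λ₁) ⊗ ⋯ ⊗ V(λ_n)` for the Levi
determined by `I`. -/
noncomputable def tensorWdimI (r : ℕ) (I : Set (Fin r)) {n : ℕ}
    (lams : Fin n → Wt r) (ν : Wt r) : ℚ :=
  ∑ᶠ nus : Fin n → Wt r,
    if (∑ i, nus i) = ν then ∏ i, wmultI r I (lams i) (nus i) else 0

/-- The multiplicity of `V(λ₀)` in `V(λ₁) ⊗ ⋯ ⊗ V(λ_n)` for the Levi determined by `I`
(by the Weyl character formula). -/
noncomputable def tmultI (r : ℕ) (I : Set (Fin r)) {n : ℕ}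
    (lam0 : Wt r) (lams : Fin n → Wt r) : ℚ :=
  ∑ᶠ w : WeylGp r I,
    sgn r (w : Wt r ≃ₗ[ℚ] Wt r) *
      tensorWdimI r I lams (lam0 + rhoI r I - (w : Wt r ≃ₗ[ℚ] Wt r) (rhoI r I))

/-- `V(λ₀)` occurs in `V(λ₁) ⊗ ⋯ ⊗ V(λ_n)` for the Levi determined by `I`. -/
def occursI (r : ℕ) (I : Set (Fin r)) {n : ℕ} (lam0 : Wt r) (lams : Fin n → Wt r) : Prop :=
  0 < tmultI r I lam0 lams

/-- `V(λ₀)` occurs in `V(λ₁) ⊗ ⋯ ⊗ V(λ_n)` for `Spin(2r+1)`. -/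
def occurs (r : ℕ) {n : ℕ} (lam0 : Wt r) (lams : Fin n → Wt r) : Prop :=
  occursI r Set.univ lam0 lams

/-- `q(I)`: the maximal (1-indexed) index of an element of `I` (and `0` if `I = ∅`). -/
noncomputable def qmax (r : ℕ) (I : Set (Fin r)) : ℕ := sSup {k | ∃ i ∈ I, (i : ℕ) + 1 = k}

/-- The minimal (1-indexed) index of an element of `I`. -/
noncomputable def pmin (r : ℕ) (I : Set (Fin r)) : ℕ := sInf {k | ∃ i ∈ I, (i : ℕ) + 1 = k}

/-- `q(λ)`: the maximal (1-indexed) index of a simple root in the support of `λ`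
(`0` for `λ = 0`). -/
noncomputable def qsup (r : ℕ) (lam : Wt r) : ℕ := qmax r (SuppSet r lam)

/-- The first fundamental weight `ω₁ = ε₁` (for `r ≥ 2`). -/
def omegaOne (r : ℕ) : Wt r := fun j => if (j : ℕ) = 0 then 1 else 0

/-- The fundamental weights of `Spin(2r+1)`. -/
def fw (r : ℕ) (i : Fin r) : Wt r :=
  if (i : ℕ) + 1 < r then (fun j => if j ≤ i then 1 else 0) else fun _ => 1/2

/-- `τ⁻`: the dominant weight whose coefficient on the fundamental weight `ω_i` is
`max 0 (-⟨τ, α_i^∨⟩)`. -/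
noncomputable def tauMinus (r : ℕ) (τ : Wt r) : Wt r :=
  ∑ i : Fin r, max 0 (-(pair r τ i)) • fw r i

/-- `Σ_{j ≤ i < k} α_i` (0-indexed). -/
def rangeSum (r j k : ℕ) : Wt r :=
  ∑ i : Fin r, if j ≤ (i : ℕ) ∧ (i : ℕ) < k then alpha r i else 0

/-- A rational number is an even integer. -/
def EvenQ (x : ℚ) : Prop := ∃ m : ℤ, x = 2 * m

/-- A rational number is an odd integer. -/
def OddQ (x : ℚ) : Prop := ∃ m : ℤ, x = 2 * m + 1

/-- `l(θ)`: the minimal `l ≥ 1` (1-indexed) such that the coefficient `a_i` of `θ` equals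
`a_r` for all `i ≥ l`. -/
noncomputable def lmin (r : ℕ) (θ : Wt r) : ℕ :=
  sInf {l : ℕ | 1 ≤ l ∧ ∀ k : ℕ, l ≤ k + 1 → k < r → ac r θ k = ac r θ (r - 1)}

/-- Condition (C1) in the definition of `Ξ(λ)`: the coefficients weakly increase up to
the first element of `I = Supp(λ)`. -/
def CondC1 (r : ℕ) (I : Set (Fin r)) (τ : Wt r) : Prop :=
  ∀ i j : ℕ, i ≤ j → j + 1 ≤ pmin r I → ac r τ i ≤ ac r τ j

/-- Condition (C2): for consecutive elements `s < t` of `I`,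
`Σ_{i=s}^{t-1} |a_{i+1} - a_i| ≤ a_s + a_t`. -/
def CondC2 (r : ℕ) (I : Set (Fin r)) (τ : Wt r) : Prop :=
  ∀ s t : Fin r, s ∈ I → t ∈ I → s < t → (∀ u : Fin r, s < u → u < t → u ∉ I) →
    (∑ i ∈ Finset.Ico (s : ℕ) (t : ℕ), |ac r τ (i + 1) - ac r τ i|) ≤
      acoeff r τ s + acoeff r τ t

/-- Condition (C3): if `q = max I < r` then `a_r` is even and
`2 Σ_{i ∈ I_q} (a_{i+1} - a_i) ≤ a_r` where `I_q = {q ≤ i < r : a_i < a_{i+1}}`. -/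
def CondC3 (r : ℕ) (I : Set (Fin r)) (τ : Wt r) : Prop :=
  qmax r I < r →
    EvenQ (ac r τ (r - 1)) ∧
      2 * (∑ i ∈ Finset.Ico (qmax r I - 1) (r - 1),
          if ac r τ i < ac r τ (i + 1) then ac r τ (i + 1) - ac r τ i else 0) ≤
        ac r τ (r - 1)

/-- The set `Ξ(λ)` of the paper. -/
def XiSet (r : ℕ) (lam : Wt r) : Set (Wt r) :=
  {τ | τ ∈ NDelta r ∧ CondC1 r (SuppSet r lam) τ ∧ CondC2 r (SuppSet r lam) τ ∧
    CondC3 r (SuppSet r lam) τ}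

/-- `θ` is the highest root of the root subsystem generated by the simple roots in `S`. -/
def IsHighestRootOf (r : ℕ) (S : Set (Fin r)) (θ : Wt r) : Prop :=
  θ ∈ PhiPos r ∧ SuppDelta r θ ⊆ S ∧
    ∀ θ' ∈ PhiPos r, SuppDelta r θ' ⊆ S → θ - θ' ∈ AddSubmonoid.closure (alpha r '' S)

/-- A subset of the vertices of the Dynkin diagram of `B_r` is connected iff it is an
interval. -/
def IsConnectedSupp (r : ℕ) (S : Set (Fin r)) : Prop :=
  ∀ i j k : Fin r, i ∈ S → k ∈ S → i ≤ j → j ≤ k → j ∈ S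


/-- the coefficients of `λ - μ` weakly decrease beyond `q(λ)`. -/
theorem stmt8 (r : ℕ) (hr : 2 ≤ r) (lam mu : Wt r)
    (hlw : IsWeight r lam) (hld : IsDominant r lam)
    (hmw : IsWeight r mu) (hmd : IsDominant r mu)
    (hle : domLE r mu lam) (q : Fin r) (hq : pair r lam q ≠ 0)
    (hqmax : ∀ i : Fin r, q < i → pair r lam i = 0) (hqr : (q : ℕ) < r - 1) :
    ∀ i j : Fin r, q ≤ i → i ≤ j → acoeff r (lam - mu) j ≤ acoeff r (lam - mu) i := by
  intro i j hqi hij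
  have hpair_sub : ∀ k : Fin r, pair r (lam - mu) k = pair r lam k - pair r mu k := by
    intro k
    unfold pair
    split <;> simp [Pi.sub_apply] <;> ring
  have hple : ∀ k : Fin r, q < k → pair r (lam - mu) k ≤ 0 := by
    intro k hk
    rw [hpair_sub, hqmax k hk]
    linarith [hmd k]
  have hneg : ∀ n : ℕ, ∀ k : Fin r, q < k → (k : ℕ) + n + 1 = r → (lam - mu) k ≤ 0 := by
    intro n
    induction n with
    | zero =>
      intro k hk hkr
      have hp := hple k hk
      unfold pair at hp
      rw [dif_neg (by omega)] at hp
      linarith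
    | succ n ih =>
      intro k hk hkr
      have h1 : (k : ℕ) + 1 < r := by omega
      have hp := hple k hk
      unfold pair at hp
      rw [dif_pos h1] at hp
      have hk2 : q < (⟨(k : ℕ) + 1, h1⟩ : Fin r) := by
        rw [Fin.lt_def] at hk ⊢; simp; omega
      have h2 := ih ⟨(k : ℕ) + 1, h1⟩ hk2 (by simp; omega)
      linarith
  have hneg' : ∀ k : Fin r, q < k → (lam - mu) k ≤ 0 := fun k hk =>
    hneg (r - 1 - (k : ℕ)) k hk (by omega)
  unfold acoeff
  have hsub : Finset.Iic i ∪ Finset.Ioc i j = Finset.Iic j := by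
    ext a
    simp only [Finset.mem_union, Finset.mem_Iic, Finset.mem_Ioc, Fin.le_def, Fin.lt_def]
    have := hij
    rw [Fin.le_def] at this
    omega
  have hdisj : Disjoint (Finset.Iic i) (Finset.Ioc i j) := by
    rw [Finset.disjoint_left]
    intro a ha ha'
    rw [Finset.mem_Iic] at ha
    rw [Finset.mem_Ioc] at ha'
    exact absurd ha'.1 (not_lt.mpr ha)
  rw [← hsub, Finset.sum_union hdisj]
  have hsum : (∑ k ∈ Finset.Ioc i j, (lam - mu) k) ≤ 0 := by
    apply Finset.sum_nonpos
    intro k hk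
    rw [Finset.mem_Ioc] at hk
    exact hneg' k (lt_of_le_of_lt hqi hk.1)
  linarith

end SpinOdd
end

section
/- Let $\lambda$ be a dominant weight of $\mathrm{Spin}(2r+1)$, let $I = \mathrm{Supp}(\lambda)$, and define $\Xi(\lambda) \subseteq \mathbb{N}\Delta$ as the set of $\tau = \sum_{i=1}^r a_i\alpha_i$ satisfying: (C1) $a_1 \leq \cdots \leq a_p$ where $p$ is minimal with $\alpha_p \in I$; (C2) for consecutive indices $s < t$ in $I$ (with no index of $I$ strictly between), $\sum_{i=s}^{t-1}|a_{i+1}-a_i| \leq a_s + a_t$; (C3) if $q = \max I < r$, then $a_r$ is even and $2\sum_{i \in I_q}(a_{i+1}-a_i) \leq a_r$, where $I_q = \{q \leq i < r : a_i < a_{i+1}\}$. Then: (i) if $\alpha_r \in I$, $\Xi(\lambda) = \mathbb{N}\Phi^+(\lambda)$; (ii) if $\alpha_r \notin I$, $\Xi(\lambda) = \mathbb{N}\Phi_l^+(\lambda)$. -/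
open scoped BigOperators Classical

namespace SpinOdd

section Proofs16
set_option linter.unusedVariables false
set_option linter.unusedTactic false
set_option linter.unnecessarySeqFocus false

lemma acoeff_add (r : ℕ) (x y : Wt r) (i : Fin r) :
    acoeff r (x + y) i = acoeff r x i + acoeff r y i := by
  simp [acoeff, Finset.sum_add_distrib]

lemma acoeff_sub (r : ℕ) (x y : Wt r) (i : Fin r) :
    acoeff r (x - y) i = acoeff r x i - acoeff r y i := by
  simp [acoeff, Finset.sum_sub_distrib]

lemma acoeff_smul (r : ℕ) (c : ℚ) (x : Wt r) (i : Fin r) :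
    acoeff r (c • x) i = c * acoeff r x i := by
  simp [acoeff, Finset.mul_sum]

lemma acoeff_zero (r : ℕ) (i : Fin r) : acoeff r 0 i = 0 := by simp [acoeff]

lemma acoeff_eps (r : ℕ) (i k : Fin r) :
    acoeff r (eps r i) k = if i ≤ k then 1 else 0 := by
  simp [acoeff, eps, Finset.sum_pi_single']

lemma acoeff_succ (r : ℕ) (z : Wt r) (n : ℕ) (hn : n + 1 < r) :
    acoeff r z ⟨n+1, hn⟩ = acoeff r z ⟨n, Nat.lt_of_succ_lt hn⟩ + z ⟨n+1, hn⟩ := by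
  have hn' : n < r := Nat.lt_of_succ_lt hn
  have : Finset.Iic (⟨n+1, hn⟩ : Fin r) = insert ⟨n+1, hn⟩ (Finset.Iic ⟨n, hn'⟩) := by
    ext u
    simp only [Finset.mem_Iic, Finset.mem_insert, Fin.le_def, Fin.ext_iff]
    omega
  rw [acoeff, this, Finset.sum_insert (by simp [Fin.ext_iff]), acoeff, add_comm]

lemma acoeff_injective (r : ℕ) (x y : Wt r) (h : ∀ k, acoeff r x k = acoeff r y k) :
    x = y := by
  funext m
  have key : ∀ n : ℕ, ∀ hn : n < r, x ⟨n, hn⟩ = y ⟨n, hn⟩ := by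
    intro n
    induction n with
    | zero =>
      intro hn
      have h0 := h ⟨0, hn⟩
      have e : ∀ z : Wt r, acoeff r z ⟨0, hn⟩ = z ⟨0, hn⟩ := by
        intro z
        have : Finset.Iic (⟨0, hn⟩ : Fin r) = {⟨0, hn⟩} := by
          ext u
          simp only [Finset.mem_Iic, Finset.mem_singleton, Fin.le_def, Fin.ext_iff]
          omega
        rw [acoeff, this, Finset.sum_singleton]
      rwa [e x, e y] at h0
    | succ n ih =>
      intro hn
      have hn' : n < r := Nat.lt_of_succ_lt hn
      have h1 := h ⟨n + 1, hn⟩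
      rw [acoeff_succ r x n hn, acoeff_succ r y n hn, h ⟨n, hn'⟩] at h1
      exact add_left_cancel h1
  exact key m m.isLt

/-- `Tf a`: the root-lattice element with simple-root coefficients `a`. -/
noncomputable def Tf (r : ℕ) (a : ℕ → ℕ) : Wt r := ∑ k : Fin r, (a (k : ℕ) : ℚ) • alpha r k

lemma acoeff_alpha (r : ℕ) (k i : Fin r) :
    acoeff r (alpha r k) i = if i = k then 1 else 0 := by
  have hi := i.isLt
  have hk := k.isLt
  rw [alpha]
  split_ifs with h h' h'
  · rw [acoeff_sub, acoeff_eps, acoeff_eps]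
    subst h'
    simp only [Fin.le_def]
    rw [if_pos (le_refl _), if_neg (by omega)]
    norm_num
  · rw [acoeff_sub, acoeff_eps, acoeff_eps]
    simp only [Fin.le_def]
    have hik : (i : ℕ) ≠ (k : ℕ) := fun hh => h' (Fin.ext hh)
    by_cases hle : (k : ℕ) ≤ (i : ℕ)
    · rw [if_pos hle, if_pos (by omega)]; norm_num
    · rw [if_neg hle, if_neg (by omega)]; norm_num
  · subst h'
    rw [acoeff_eps, if_pos (le_refl _)]
  · rw [acoeff_eps]
    have hik : (i : ℕ) ≠ (k : ℕ) := fun hh => h' (Fin.ext hh)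
    rw [if_neg]
    simp only [Fin.le_def]
    omega

lemma acoeff_sum {ι : Type*} (r : ℕ) (s : Finset ι) (f : ι → Wt r) (i : Fin r) :
    acoeff r (∑ k ∈ s, f k) i = ∑ k ∈ s, acoeff r (f k) i := by
  simp only [acoeff, Finset.sum_apply]
  rw [Finset.sum_comm]

lemma acoeff_Tf (r : ℕ) (a : ℕ → ℕ) (i : Fin r) :
    acoeff r (Tf r a) i = (a (i : ℕ) : ℚ) := by
  rw [Tf, acoeff_sum]
  simp only [acoeff_smul, acoeff_alpha]
  rw [Finset.sum_eq_single i]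
  · simp
  · intro b _ hb
    rw [if_neg (fun hh => hb (by rw [hh])), mul_zero]
  · intro hi; exact absurd (Finset.mem_univ i) hi

lemma Tf_mem_NDelta (r : ℕ) (a : ℕ → ℕ) : Tf r a ∈ NDelta r := by
  rw [Tf]
  apply AddSubmonoid.sum_mem
  intro k _
  have h1 : ((a (k : ℕ) : ℚ) • alpha r k : Wt r) = (a (k : ℕ)) • alpha r k :=
    (Nat.cast_smul_eq_nsmul ℚ (a (k : ℕ)) (alpha r k))
  rw [h1]
  exact AddSubmonoid.nsmul_mem (S := NDelta r)
    (AddSubmonoid.subset_closure (Set.mem_range_self k)) _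

lemma mem_NDelta_coeffs (r : ℕ) (τ : Wt r) (h : τ ∈ NDelta r) :
    ∀ i : Fin r, ∃ n : ℕ, acoeff r τ i = n := by
  refine AddSubmonoid.closure_induction (motive := fun τ _ => ∀ i : Fin r, ∃ n : ℕ, acoeff r τ i = n)
    ?_ ?_ ?_ h
  · rintro x ⟨k, rfl⟩ i
    rw [acoeff_alpha]
    split_ifs
    · exact ⟨1, by norm_num⟩
    · exact ⟨0, by norm_num⟩
  · intro i; exact ⟨0, by simp [acoeff_zero]⟩
  · intro x y _ _ ihx ihy i
    obtain ⟨n, hn⟩ := ihx i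
    obtain ⟨m, hm⟩ := ihy i
    exact ⟨n + m, by rw [acoeff_add, hn, hm]; push_cast; ring⟩

/-- Every element of `ℕΔ` is `Tf r a` for coefficients `a` vanishing from `r` on. -/
lemma mem_NDelta_exists_Tf (r : ℕ) (τ : Wt r) (h : τ ∈ NDelta r) :
    ∃ a : ℕ → ℕ, (∀ k, r ≤ k → a k = 0) ∧ τ = Tf r a := by
  choose N hN using mem_NDelta_coeffs r τ h
  refine ⟨fun k => if hk : k < r then N ⟨k, hk⟩ else 0, fun k hk => by simp [Nat.not_lt_of_le hk], ?_⟩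
  apply acoeff_injective
  intro k
  rw [acoeff_Tf]
  simp [k.isLt, hN k]

/-- interval shape `1_{[i,j)}` -/
def shE (i j : ℕ) : ℕ → ℕ := fun k => if i ≤ k ∧ k < j then 1 else 0

/-- shape `1_{[i,j)} + 2·1_{[j,r)}` -/
def shF (r i j : ℕ) : ℕ → ℕ :=
  fun k => (if i ≤ k ∧ k < j then 1 else 0) + (if j ≤ k ∧ k < r then 2 else 0)

lemma Tf_shE_eq (r i j : ℕ) (hi : i < j) (hj : j < r) :
    Tf r (shE i j) = eps r ⟨i, lt_trans hi hj⟩ - eps r ⟨j, hj⟩ := by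
  apply acoeff_injective
  intro k
  rw [acoeff_Tf, acoeff_sub, acoeff_eps, acoeff_eps, shE]
  simp only [Fin.le_def]
  by_cases h1 : i ≤ (k : ℕ) <;> by_cases h2 : j ≤ (k : ℕ)
  · rw [if_neg (by omega), if_pos h1, if_pos h2]; norm_num
  · rw [if_pos (by omega), if_pos h1, if_neg h2]; norm_num
  · rw [if_neg (by omega), if_neg h1, if_neg (by omega)]; norm_num
  · rw [if_neg (by omega), if_neg h1, if_neg h2]; norm_num

lemma Tf_shE_r (r i : ℕ) (hi : i < r) :
    Tf r (shE i r) = eps r ⟨i, hi⟩ := by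
  apply acoeff_injective
  intro k
  rw [acoeff_Tf, acoeff_eps, shE]
  simp only [Fin.le_def]
  have := k.isLt
  by_cases h1 : i ≤ (k : ℕ) <;> simp [h1, this]

lemma Tf_shF_eq (r i j : ℕ) (hi : i < j) (hj : j < r) :
    Tf r (shF r i j) = eps r ⟨i, lt_trans hi hj⟩ + eps r ⟨j, hj⟩ := by
  apply acoeff_injective
  intro k
  rw [acoeff_Tf, acoeff_add, acoeff_eps, acoeff_eps, shF]
  simp only [Fin.le_def]
  have hk := k.isLt
  by_cases h1 : i ≤ (k : ℕ) <;> by_cases h2 : j ≤ (k : ℕ)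
  · rw [if_neg (by omega), if_pos ⟨h2, hk⟩, if_pos h1, if_pos h2]; norm_num
  · rw [if_pos ⟨h1, by omega⟩, if_neg (by omega), if_pos h1, if_neg h2]; norm_num
  · exact absurd (le_trans (le_of_lt hi) h2) h1
  · rw [if_neg (by omega), if_neg (by omega), if_neg h1, if_neg h2]; norm_num

/-- `I'`: the 0-indexed support of `lam`, as a set of naturals. -/
def ISet (r : ℕ) (lam : Wt r) : Set ℕ :=
  {k | ∃ hk : k < r, (⟨k, hk⟩ : Fin r) ∈ SuppSet r lam}

lemma suppDelta_Tf (r : ℕ) (a : ℕ → ℕ) :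
    SuppDelta r (Tf r a) = {i : Fin r | a (i : ℕ) ≠ 0} := by
  ext i
  simp [SuppDelta, acoeff_Tf, Nat.cast_eq_zero]

lemma Tf_mem_nonempty (r : ℕ) (lam : Wt r) (a : ℕ → ℕ) (v : ℕ)
    (hv : v ∈ ISet r lam) (hav : a v ≠ 0) :
    (SuppDelta r (Tf r a) ∩ SuppSet r lam).Nonempty := by
  obtain ⟨hvr, hvs⟩ := hv
  exact ⟨⟨v, hvr⟩, by rw [suppDelta_Tf]; exact hav, hvs⟩

lemma mem_PhiPosLam_E (r : ℕ) (lam : Wt r) (i j v : ℕ) (hij : i < j) (hjr : j ≤ r)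
    (hv : v ∈ ISet r lam) (hiv : i ≤ v) (hvj : v < j) :
    Tf r (shE i j) ∈ PhiPosLam r lam := by
  have hsh : shE i j v ≠ 0 := by simp [shE, hiv, hvj]
  refine ⟨?_, Tf_mem_nonempty r lam _ v hv hsh⟩
  rcases Nat.lt_or_ge j r with hj | hj
  · rw [Tf_shE_eq r i j hij hj]
    exact Or.inl ⟨_, _, by simp [Fin.lt_def, hij], Or.inl rfl⟩
  · have hjr' : j = r := le_antisymm hjr hj
    have hir : i < r := hjr' ▸ hij
    rw [hjr', Tf_shE_r r i hir]
    exact Or.inr ⟨_, rfl⟩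

lemma mem_PhiPosLongLam_E (r : ℕ) (lam : Wt r) (i j v : ℕ) (hij : i < j) (hjr : j < r)
    (hv : v ∈ ISet r lam) (hiv : i ≤ v) (hvj : v < j) :
    Tf r (shE i j) ∈ PhiPosLongLam r lam := by
  have hsh : shE i j v ≠ 0 := by simp [shE, hiv, hvj]
  refine ⟨?_, Tf_mem_nonempty r lam _ v hv hsh⟩
  rw [Tf_shE_eq r i j hij hjr]
  exact ⟨_, _, by simp [Fin.lt_def, hij], Or.inl rfl⟩

lemma mem_PhiPosLongLam_F (r : ℕ) (lam : Wt r) (i j v : ℕ) (hij : i < j) (hjr : j < r)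
    (hv : v ∈ ISet r lam) (hiv : i ≤ v) :
    Tf r (shF r i j) ∈ PhiPosLongLam r lam := by
  have hvr : v < r := hv.1
  have hsh : shF r i j v ≠ 0 := by
    simp only [shF]
    rcases Nat.lt_or_ge v j with h | h
    · simp [hiv, h]
    · simp [h, hvr, Nat.not_lt_of_le h]
  refine ⟨?_, Tf_mem_nonempty r lam _ v hv hsh⟩
  rw [Tf_shF_eq r i j hij hjr]
  exact ⟨_, _, by simp [Fin.lt_def, hij], Or.inr rfl⟩

lemma mem_PhiPosLam_of_long (r : ℕ) (lam : Wt r) (θ : Wt r)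
    (h : θ ∈ PhiPosLongLam r lam) : θ ∈ PhiPosLam r lam :=
  ⟨Or.inl h.1, h.2⟩

/-- Every generator is `Tf` of a shape, with a support witness. -/
lemma phiPosLam_cases (r : ℕ) (lam : Wt r) (θ : Wt r) (hθ : θ ∈ PhiPosLam r lam) :
    (∃ i j v, i ≤ v ∧ v < j ∧ j ≤ r ∧ i < j ∧ v ∈ ISet r lam ∧ θ = Tf r (shE i j)) ∨
    (∃ i j v, i ≤ v ∧ v < r ∧ i < j ∧ j < r ∧ v ∈ ISet r lam ∧ θ = Tf r (shF r i j)) := by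
  obtain ⟨hroot, ⟨w, hw1, hw2⟩⟩ := hθ
  have hwI : (w : ℕ) ∈ ISet r lam := ⟨w.isLt, by simpa using hw2⟩
  rcases hroot with ⟨i, j, hij, (rfl | rfl)⟩ | ⟨i, rfl⟩
  · left
    refine ⟨i, j, w, ?_, ?_, le_of_lt j.isLt, hij, hwI, (Tf_shE_eq r i j hij j.isLt).symm⟩
    · -- support of E is [i, j)
      have := hw1
      rw [show (eps r i - eps r j : Wt r) = Tf r (shE i j) from (Tf_shE_eq r i j hij j.isLt).symm,
        suppDelta_Tf] at this
      simp only [Set.mem_setOf_eq, shE, ne_eq, ite_eq_right_iff, not_forall] at this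
      exact this.1.1
    · have := hw1
      rw [show (eps r i - eps r j : Wt r) = Tf r (shE i j) from (Tf_shE_eq r i j hij j.isLt).symm,
        suppDelta_Tf] at this
      simp only [Set.mem_setOf_eq, shE, ne_eq, ite_eq_right_iff, not_forall] at this
      exact this.1.2
  · right
    refine ⟨i, j, w, ?_, w.isLt, hij, j.isLt, hwI, (Tf_shF_eq r i j hij j.isLt).symm⟩
    · have := hw1
      rw [show (eps r i + eps r j : Wt r) = Tf r (shF r i j) from (Tf_shF_eq r i j hij j.isLt).symm,
        suppDelta_Tf] at this
      simp only [Set.mem_setOf_eq, shF, ne_eq] at this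
      by_contra hiw
      push_neg at hiw
      have hij' : (i : ℕ) < (j : ℕ) := hij
      rw [if_neg (by omega), if_neg (by omega)] at this
      exact this rfl
  · left
    have hir := i.isLt
    refine ⟨i, r, w, ?_, w.isLt, le_refl r, hir, hwI, (Tf_shE_r r i hir).symm⟩
    have := hw1
    rw [show (eps r i : Wt r) = Tf r (shE i r) from (Tf_shE_r r i hir).symm, suppDelta_Tf] at this
    simp only [Set.mem_setOf_eq, shE, ne_eq, ite_eq_right_iff, not_forall] at this
    exact this.1.1

lemma phiPosLongLam_cases (r : ℕ) (lam : Wt r) (θ : Wt r) (hθ : θ ∈ PhiPosLongLam r lam) :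
    (∃ i j v, i ≤ v ∧ v < j ∧ j < r ∧ i < j ∧ v ∈ ISet r lam ∧ θ = Tf r (shE i j)) ∨
    (∃ i j v, i ≤ v ∧ v < r ∧ i < j ∧ j < r ∧ v ∈ ISet r lam ∧ θ = Tf r (shF r i j)) := by
  obtain ⟨hroot, hne⟩ := hθ
  have h' := phiPosLam_cases r lam θ ⟨Or.inl hroot, hne⟩
  rcases h' with ⟨i, j, v, h1, h2, h3, h4, h5, rfl⟩ | h'
  · left
    rcases Nat.lt_or_ge j r with hj | hj
    · exact ⟨i, j, v, h1, h2, hj, h4, h5, rfl⟩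
    · -- then θ = eps i, a short root; contradict long
      exfalso
      have hjr : j = r := le_antisymm h3 hj
      have hir : i < r := hjr ▸ h4
      rw [hjr, Tf_shE_r r i hir] at hroot
      obtain ⟨a, b, hab, hor⟩ := hroot
      have hba : b ≠ a := (Fin.ne_of_lt hab).symm
      rcases hor with h | h
      · have h1' := congrFun h b
        simp only [eps, Pi.single_apply, Pi.sub_apply, if_neg hba, if_pos rfl] at h1'
        split_ifs at h1' <;> norm_num at h1'
      · have h1' := congrFun h b
        have h2' := congrFun h a
        simp only [eps, Pi.single_apply, Pi.add_apply, if_neg hba, if_pos rfl] at h1' h2'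
        have e1 : b = ⟨i, hir⟩ := by
          by_contra hne
          rw [if_neg hne] at h1'
          norm_num at h1'
        have e2 : a = ⟨i, hir⟩ := by
          by_contra hne
          rw [if_neg hne] at h2'
          simp at h2'
          split_ifs at h2' <;> norm_num at h2'
        exact hba (e1.trans e2.symm)
  · right; exact h'

/-! ### ℕ-world conditions -/

/-- window sum `Σ_{k∈[s,t)} |a(k+1) − a(k)|` (in `ℤ`). -/
def Wsum (a : ℕ → ℕ) (s t : ℕ) : ℤ := ∑ k ∈ Finset.Ico s t, |(a (k+1) : ℤ) - a k|

/-- ascent sum `Σ_{k∈[u,w)} max(a(k+1) − a(k), 0)` (in `ℤ`). -/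
def AZ (a : ℕ → ℕ) (u w : ℕ) : ℤ := ∑ k ∈ Finset.Ico u w, max ((a (k+1) : ℤ) - a k) 0

/-- `s` and `t` are consecutive elements of `I'`. -/
def Consec (I' : Set ℕ) (s t : ℕ) : Prop :=
  s ∈ I' ∧ t ∈ I' ∧ s < t ∧ ∀ u ∈ I', s < u → u < t → False

def D1 (I' : Set ℕ) (a : ℕ → ℕ) : Prop := ∀ k l, k ≤ l → l ≤ sInf I' → a k ≤ a l

def D2 (I' : Set ℕ) (a : ℕ → ℕ) : Prop :=
  ∀ s t, Consec I' s t → Wsum a s t ≤ (a s : ℤ) + a t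

def D3 (r : ℕ) (I' : Set ℕ) (a : ℕ → ℕ) : Prop :=
  2 ∣ a (r-1) ∧ 2 * AZ a (sSup I') (r-1) ≤ (a (r-1) : ℤ)

/-! ### small sum lemmas -/

lemma telescope (a : ℕ → ℕ) (s t : ℕ) (h : s ≤ t) :
    (∑ k ∈ Finset.Ico s t, ((a (k+1) : ℤ) - a k)) = (a t : ℤ) - a s := by
  induction t with
  | zero =>
    have : s = 0 := Nat.le_zero.mp h
    subst this; simp
  | succ t ih =>
    rcases Nat.lt_or_ge s (t+1) with h' | h'
    · have hst : s ≤ t := Nat.lt_succ_iff.mp h'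
      rw [Finset.sum_Ico_succ_top hst, ih hst]; ring
    · have : s = t + 1 := le_antisymm h h'
      subst this; simp

lemma Wsum_nonneg (a : ℕ → ℕ) (s t : ℕ) : 0 ≤ Wsum a s t :=
  Finset.sum_nonneg fun k _ => abs_nonneg _

lemma Wsum_of_down (a : ℕ → ℕ) (s t : ℕ) (h : s ≤ t)
    (hd : ∀ k, s ≤ k → k < t → a (k+1) ≤ a k) :
    Wsum a s t = (a s : ℤ) - a t := by
  have : Wsum a s t = ∑ k ∈ Finset.Ico s t, -(((a (k+1) : ℤ)) - a k) := by
    apply Finset.sum_congr rfl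
    intro k hk
    rw [Finset.mem_Ico] at hk
    rw [abs_of_nonpos]
    have := hd k hk.1 hk.2
    omega
  rw [this, Finset.sum_neg_distrib, telescope a s t h]
  ring

lemma Wsum_of_up (a : ℕ → ℕ) (s t : ℕ) (h : s ≤ t)
    (hu : ∀ k, s ≤ k → k < t → a k ≤ a (k+1)) :
    Wsum a s t = (a t : ℤ) - a s := by
  have : Wsum a s t = ∑ k ∈ Finset.Ico s t, (((a (k+1) : ℤ)) - a k) := by
    apply Finset.sum_congr rfl
    intro k hk
    rw [Finset.mem_Ico] at hk
    rw [abs_of_nonneg]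
    have := hu k hk.1 hk.2
    omega
  rw [this, telescope a s t h]

lemma AZ_nonneg (a : ℕ → ℕ) (u w : ℕ) : 0 ≤ AZ a u w :=
  Finset.sum_nonneg fun k _ => le_max_right _ _

lemma net_le_AZ (a : ℕ → ℕ) (u w : ℕ) (h : u ≤ w) : (a w : ℤ) - a u ≤ AZ a u w := by
  rw [← telescope a u w h]
  exact Finset.sum_le_sum fun k _ => le_max_left _ _

lemma AZ_mono (a : ℕ → ℕ) (u u' w : ℕ) (h : u ≤ u') : AZ a u' w ≤ AZ a u w := by
  apply Finset.sum_le_sum_of_subset_of_nonneg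
  · apply Finset.Ico_subset_Ico h (le_refl _)
  · intro k _ _; exact le_max_right _ _

lemma AZ_of_down (a : ℕ → ℕ) (u w : ℕ)
    (hd : ∀ k, u ≤ k → k < w → a (k+1) ≤ a k) : AZ a u w = 0 := by
  apply Finset.sum_eq_zero
  intro k hk
  rw [Finset.mem_Ico] at hk
  have := hd k hk.1 hk.2
  rw [max_eq_right]
  omega

/-! ### chain lemmas -/

lemma chain_up_ge (a : ℕ → ℕ) (v j : ℕ) (hu : ∀ k, v ≤ k → k + 1 < j → a k ≤ a (k+1)) :
    ∀ k, v ≤ k → k < j → a v ≤ a k := by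
  intro k hvk hkj
  induction k, hvk using Nat.le_induction with
  | base => exact le_refl _
  | succ k hk ih => exact le_trans (ih (lt_trans (Nat.lt_succ_self k) hkj)) (hu k hk hkj)

lemma chain_down_ge (a : ℕ → ℕ) (i v : ℕ) (hd : ∀ k, i ≤ k → k + 1 ≤ v → a (k+1) ≤ a k) :
    ∀ k, i ≤ k → k ≤ v → a v ≤ a k := by
  have key : ∀ m, i ≤ v - m → a v ≤ a (v - m) := by
    intro m
    induction m with
    | zero => intro _; simp
    | succ m ih =>
      intro him
      rcases Nat.lt_or_ge m v with hmv | hmv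
      · have h1 : v - (m+1) + 1 = v - m := by omega
        have h2 := hd (v - (m+1)) him (by omega)
        rw [h1] at h2
        exact le_trans (ih (by omega)) h2
      · have : v - (m+1) = v - m := by omega
        rw [this]
        exact ih (this ▸ him)
  intro k hik hkv
  have : k = v - (v - k) := by omega
  rw [this]
  exact key (v - k) (by omega)

lemma chain_eq (a : ℕ → ℕ) (s t : ℕ) (h : ∀ m, s ≤ m → m < t → a (m+1) = a m) :
    ∀ k, s ≤ k → k ≤ t → a k = a s := by
  intro k hsk hkt
  induction k, hsk using Nat.le_induction with
  | base => rfl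
  | succ k hk ih => rw [h k hk (by omega), ih (by omega)]

/-! ### step construction -/

lemma rightStep (r : ℕ) (a : ℕ → ℕ) (ha0 : ∀ k, r ≤ k → a k = 0) (v : ℕ) (hv : v < r)
    (hav : 1 ≤ a v) :
    ∃ j, v < j ∧ j ≤ r ∧
      (∀ k, v ≤ k → k < j → 1 ≤ a k) ∧
      (∀ k, k + 1 = j → a j < a k) ∧
      (∀ k, v ≤ k → k + 1 < j → a k ≤ a (k+1)) := by
  have hex : ∃ d, a (v+1+d) = 0 ∨ a (v+1+d) < a (v+d) :=
    ⟨r, Or.inl (ha0 _ (by omega))⟩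
  obtain ⟨d, hspec, hmin⟩ : ∃ d, (a (v+1+d) = 0 ∨ a (v+1+d) < a (v+d)) ∧
      ∀ d', d' < d → ¬(a (v+1+d') = 0 ∨ a (v+1+d') < a (v+d')) :=
    ⟨Nat.find hex, Nat.find_spec hex, fun d' h => Nat.find_min hex h⟩
  have hpos : ∀ k, v ≤ k → k < v + 1 + d → 1 ≤ a k := by
    intro k hvk hkj
    rcases Nat.eq_or_lt_of_le hvk with rfl | hlt
    · exact hav
    · have hk' : k - v - 1 < d := by omega
      have h1 := hmin _ hk'
      push_neg at h1
      have h2 := h1.1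
      rw [show v + 1 + (k - v - 1) = k by omega] at h2
      omega
  refine ⟨v + 1 + d, by omega, ?_, hpos, ?_, ?_⟩
  · -- j ≤ r
    by_contra hgt
    push_neg at hgt
    have hdr : r - (v+1) < d := by omega
    have h1 := hmin _ hdr
    push_neg at h1
    exact absurd (ha0 (v+1+(r-(v+1))) (by omega)) h1.1
  · -- descent at j
    intro k hk
    have hkvd : k = v + d := by omega
    subst hkvd
    have hp : 1 ≤ a (v + d) := hpos (v + d) (by omega) (by omega)
    rcases hspec with h | h
    · omega
    · exact lt_of_lt_of_le (lt_of_le_of_lt (le_of_eq rfl) h) (le_refl _)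
  · -- nondecreasing on [v, j-1]
    intro k hvk hkj
    have hk' : k - v < d := by omega
    have h1 := hmin _ hk'
    push_neg at h1
    have h2 := h1.2
    rw [show v + 1 + (k - v) = k + 1 by omega, show v + (k - v) = k by omega] at h2
    omega

lemma leftStep (a : ℕ → ℕ) (v : ℕ) (hav : 1 ≤ a v) :
    ∃ i, i ≤ v ∧
      (∀ k, k + 1 = i → a k < a i) ∧
      (∀ k, i ≤ k → k + 1 ≤ v → a (k+1) ≤ a k) ∧
      (∀ k, i ≤ k → k ≤ v → 1 ≤ a k) := by
  have hex : ∃ e, e = v ∨ a (v - e - 1) < a (v - e) := ⟨v, Or.inl rfl⟩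
  obtain ⟨e, hspec, hmin⟩ : ∃ e, (e = v ∨ a (v - e - 1) < a (v - e)) ∧
      ∀ e', e' < e → ¬(e' = v ∨ a (v - e' - 1) < a (v - e')) :=
    ⟨Nat.find hex, Nat.find_spec hex, fun e' h => Nat.find_min hex h⟩
  have hev : e ≤ v := by
    by_contra hgt
    push_neg at hgt
    have h1 := hmin v hgt
    push_neg at h1
    exact h1.1 rfl
  have hdown : ∀ k, v - e ≤ k → k + 1 ≤ v → a (k+1) ≤ a k := by
    intro k hik hkv
    have he' : v - (k+1) < e := by omega
    have h1 := hmin _ he'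
    push_neg at h1
    have h2 := h1.2
    rw [show v - (v - (k+1)) - 1 = k by omega, show v - (v - (k+1)) = k + 1 by omega] at h2
    omega
  refine ⟨v - e, by omega, ?_, hdown, ?_⟩
  · intro k hk
    rcases hspec with h | h
    · omega
    · rw [show k = v - e - 1 by omega]
      exact h
  · intro k hik hkv
    exact le_trans hav (chain_down_ge a (v - e) v hdown k hik hkv)

/-- The combined interval step. -/
lemma intervalStep (r : ℕ) (a : ℕ → ℕ) (ha0 : ∀ k, r ≤ k → a k = 0) (v : ℕ) (hv : v < r)
    (hav : 1 ≤ a v) :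
    ∃ i j, i ≤ v ∧ v < j ∧ j ≤ r ∧
      (∀ k, i ≤ k → k < j → 1 ≤ a k) ∧
      (∀ k, k + 1 = i → a k < a i) ∧
      (∀ k, k + 1 = j → a j < a k) ∧
      (∀ k, i ≤ k → k + 1 ≤ v → a (k+1) ≤ a k) ∧
      (∀ k, v ≤ k → k + 1 < j → a k ≤ a (k+1)) := by
  obtain ⟨j, hvj, hjr, hposR, hdesc, hup⟩ := rightStep r a ha0 v hv hav
  obtain ⟨i, hiv, hasc, hdown, hposL⟩ := leftStep a v hav
  refine ⟨i, j, hiv, hvj, hjr, ?_, hasc, hdesc, hdown, hup⟩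
  intro k hik hkj
  rcases Nat.lt_or_ge k v with h | h
  · exact hposL k hik (le_of_lt h)
  · exact hposR k h hkj

lemma Tf_add_pt (r : ℕ) (b c : ℕ → ℕ) :
    Tf r (fun k => b k + c k) = Tf r b + Tf r c := by
  apply acoeff_injective
  intro k
  rw [acoeff_add, acoeff_Tf, acoeff_Tf, acoeff_Tf]
  push_cast
  ring

lemma Tf_split (r : ℕ) (a b : ℕ → ℕ) (h : ∀ k, b k ≤ a k) :
    Tf r a = Tf r b + Tf r (fun k => a k - b k) := by
  have e : (fun k => b k + (a k - b k)) = a := by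
    funext k
    have := h k
    omega
  rw [← Tf_add_pt, e]

lemma Tf_zero_fn (r : ℕ) (a : ℕ → ℕ) (h : ∀ k, k < r → a k = 0) : Tf r a = 0 := by
  rw [Tf]
  apply Finset.sum_eq_zero
  intro k _
  rw [h k k.isLt]
  simp

/-- D1 preservation, parametric in the shape (whose restriction to `[0, sInf I']`
is `if i ≤ m then 1 else 0`). -/
lemma sub_D1_param (I' : Set ℕ) (a a' : ℕ → ℕ) (i : ℕ)
    (hD1 : D1 I' a)
    (hasc : ∀ k, k + 1 = i → a k < a i)
    (hposP : ∀ m, i ≤ m → m ≤ sInf I' → 1 ≤ a m)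
    (hform : ∀ m, m ≤ sInf I' → a' m = a m - (if i ≤ m then 1 else 0)) :
    D1 I' a' := by
  intro k l hkl hlp
  rw [hform k (le_trans hkl hlp), hform l hlp]
  by_cases hli : i ≤ l
  · have h1 : 1 ≤ a l := hposP l hli hlp
    by_cases hki : i ≤ k
    · rw [if_pos hki, if_pos hli]
      have := hD1 k l hkl hlp
      omega
    · rw [if_neg hki, if_pos hli]
      push_neg at hki
      have h2 : a k ≤ a (i-1) := hD1 k (i-1) (by omega) (by omega)
      have h3 : a (i-1) < a i := hasc (i-1) (by omega)
      have h4 : a i ≤ a l := hD1 i l hli hlp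
      omega
  · have hki : ¬ i ≤ k := fun hc => hli (le_trans hc hkl)
    rw [if_neg hki, if_neg hli]
    exact hD1 k l hkl hlp

/-- tail (nonincreasing from `q0`) preservation for interval subtraction. -/
lemma subE_tail (I' : Set ℕ) (a : ℕ → ℕ) (i j v : ℕ)
    (hvI : v ∈ I') (hiv : i ≤ v) (hvj : v < j)
    (hpos : ∀ k, i ≤ k → k < j → 1 ≤ a k)
    (hdesc : ∀ k, k + 1 = j → a j < a k)
    (htail : ∀ k, sSup I' ≤ k → a (k+1) ≤ a k)
    (hvq : v ≤ sSup I') :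
    ∀ k, sSup I' ≤ k → (fun m => a m - shE i j m) (k+1) ≤ (fun m => a m - shE i j m) k := by
  intro k hqk
  simp only [shE]
  have hik : i ≤ k := le_trans (le_trans hiv hvq) hqk
  have ht := htail k hqk
  by_cases h1 : k + 1 < j
  · have hp1 : 1 ≤ a (k+1) := hpos (k+1) (by omega) h1
    rw [if_pos (show i ≤ k + 1 ∧ k + 1 < j from ⟨by omega, h1⟩),
      if_pos (show i ≤ k ∧ k < j from ⟨hik, by omega⟩)]
    omega
  · by_cases h2 : k < j
    · have hkj : k + 1 = j := by omega
      have hd := hdesc k hkj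
      have hpk : 1 ≤ a k := hpos k hik h2
      rw [if_neg (show ¬(i ≤ k + 1 ∧ k + 1 < j) by omega),
        if_pos (show i ≤ k ∧ k < j from ⟨hik, h2⟩), hkj]
      omega
    · rw [if_neg (show ¬(i ≤ k + 1 ∧ k + 1 < j) by omega),
        if_neg (show ¬(i ≤ k ∧ k < j) by omega)]
      omega

lemma sum_lt_of_pos (r : ℕ) (a b : ℕ → ℕ) (hle : ∀ k, b k ≤ a k) (v : ℕ) (hv : v < r)
    (hbv : 1 ≤ b v) :
    ∑ k ∈ Finset.range r, (a k - b k) < ∑ k ∈ Finset.range r, a k := by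
  apply Finset.sum_lt_sum (fun k _ => Nat.sub_le _ _)
  exact ⟨v, Finset.mem_range.mpr hv, by have := hle v; omega⟩

/-- existence of an element of `I'` where `a` is positive. -/
lemma exists_pos_at_I (r : ℕ) (I' : Set ℕ) (a : ℕ → ℕ)
    (hne : I'.Nonempty) (hIr : ∀ k ∈ I', k < r)
    (ha0 : ∀ k, r ≤ k → a k = 0)
    (hD1 : D1 I' a) (hD2 : D2 I' a)
    (htail : ∀ k, sSup I' ≤ k → a (k+1) ≤ a k)
    (hex : ∃ k, k < r ∧ a k ≠ 0) :
    ∃ v ∈ I', 1 ≤ a v := by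
  by_contra hcon
  push_neg at hcon
  have hzero : ∀ v ∈ I', a v = 0 := fun v hv => by have := hcon v hv; omega
  have hbdd : BddAbove I' := ⟨r, fun x hx => le_of_lt (hIr x hx)⟩
  have hp0 : sInf I' ∈ I' := Nat.sInf_mem hne
  have hq0 : sSup I' ∈ I' := Nat.sSup_mem hne hbdd
  have hap0 : a (sInf I') = 0 := hzero _ hp0
  have haq0 : a (sSup I') = 0 := hzero _ hq0
  -- middle region
  have hmid : ∀ k, k ≤ sSup I' → a k = 0 := by
    intro k
    induction k using Nat.strong_induction_on with
    | _ k ih =>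
      intro hk
      by_cases hkp : k ≤ sInf I'
      · have := hD1 k (sInf I') hkp (le_refl _)
        omega
      · by_cases hkI : k ∈ I'
        · exact hzero k hkI
        · push_neg at hkp
          -- find the consecutive pair around k
          have hSne : ({u | u ∈ I' ∧ u < k} : Set ℕ).Nonempty := ⟨sInf I', hp0, hkp⟩
          have hSbdd : BddAbove {u | u ∈ I' ∧ u < k} := ⟨k, fun x hx => le_of_lt hx.2⟩
          set s := sSup {u | u ∈ I' ∧ u < k} with hs
          have hsmem : s ∈ {u | u ∈ I' ∧ u < k} := Nat.sSup_mem hSne hSbdd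
          have hTne : ({u | u ∈ I' ∧ k < u} : Set ℕ).Nonempty := by
            refine ⟨sSup I', hq0, ?_⟩
            rcases Nat.lt_or_ge k (sSup I') with h | h
            · exact h
            · have hkq : k = sSup I' := le_antisymm hk h
              exact absurd (hkq ▸ hq0) hkI
          set t := sInf {u | u ∈ I' ∧ k < u} with htdef
          have htmem : t ∈ {u | u ∈ I' ∧ k < u} := Nat.sInf_mem hTne
          have hs2 : s < k := hsmem.2
          have ht2 : k < t := htmem.2
          have hcons : Consec I' s t := by
            refine ⟨hsmem.1, htmem.1, by omega, ?_⟩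
            intro u hu h1 h2
            rcases Nat.lt_or_ge u k with h | h
            · have : u ≤ s := le_csSup hSbdd ⟨hu, h⟩
              omega
            · rcases Nat.eq_or_lt_of_le h with rfl | h'
              · exact hkI hu
              · have : t ≤ u := Nat.sInf_le ⟨hu, h'⟩
                omega
          have hW := hD2 s t hcons
          rw [hzero s hsmem.1, hzero t htmem.1] at hW
          -- all diffs are zero on [s, t)
          have hterm : ∀ m, s ≤ m → m < t → a (m+1) = a m := by
            intro m h1 h2
            have hnn : ∀ x ∈ Finset.Ico s t, (0:ℤ) ≤ |(a (x+1) : ℤ) - a x| :=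
              fun x _ => abs_nonneg _
            have := Finset.sum_eq_zero_iff_of_nonneg hnn
            have hWz : Wsum a s t = 0 := le_antisymm (by simpa using hW) (Wsum_nonneg a s t)
            rw [Wsum] at hWz
            have := (Finset.sum_eq_zero_iff_of_nonneg hnn).mp hWz m
              (Finset.mem_Ico.mpr ⟨h1, h2⟩)
            have habs := abs_eq_zero.mp this
            omega
          have := chain_eq a s t hterm k (by omega) (by omega)
          rw [this, hzero s hsmem.1]
  -- tail region
  have htl : ∀ k, k < r → a k = 0 := by
    intro k hk
    rcases Nat.lt_or_ge (sSup I') k with h | h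
    · -- upward chain from sSup I'
      have : ∀ m, sSup I' ≤ m → a m ≤ a (sSup I') := by
        intro m hm
        induction m, hm using Nat.le_induction with
        | base => exact le_refl _
        | succ m hm ih => exact le_trans (htail m hm) ih
      have := this k (by omega)
      omega
    · exact hmid k h
  obtain ⟨k, hk1, hk2⟩ := hex
  exact hk2 (htl k hk1)

lemma subE_D2 (I' : Set ℕ) (a : ℕ → ℕ) (i j v : ℕ)
    (hvI : v ∈ I')
    (hiv : i ≤ v) (hvj : v < j)
    (hpos : ∀ k, i ≤ k → k < j → 1 ≤ a k)
    (hasc : ∀ k, k + 1 = i → a k < a i)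
    (hdesc : ∀ k, k + 1 = j → a j < a k)
    (hdown : ∀ k, i ≤ k → k + 1 ≤ v → a (k+1) ≤ a k)
    (hup : ∀ k, v ≤ k → k + 1 < j → a k ≤ a (k+1))
    (hD2 : D2 I' a) :
    D2 I' (fun k => a k - shE i j k) := by
  intro s t hc
  obtain ⟨hs, ht, hst, hcons⟩ := hc
  set a' : ℕ → ℕ := fun k => a k - shE i j k with ha'
  have haIn : ∀ k, i ≤ k → k < j → (a' k : ℤ) = (a k : ℤ) - 1 := by
    intro k h1 h2
    have := hpos k h1 h2
    simp only [ha', shE, if_pos (And.intro h1 h2)]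
    omega
  have haOut : ∀ k, ¬(i ≤ k ∧ k < j) → (a' k : ℤ) = (a k : ℤ) := by
    intro k h
    simp only [ha', shE, if_neg h]
    omega
  have hside : v ≤ s ∨ t ≤ v := by
    by_contra hcontra
    push_neg at hcontra
    exact hcons v hvI (by omega) (by omega)
  have hD2st := hD2 s t ⟨hs, ht, hst, hcons⟩
  rcases hside with hvs | hts
  · -- v ≤ s
    by_cases hjs : j ≤ s
    · -- unchanged
      have hW : Wsum a' s t = Wsum a s t := by
        apply Finset.sum_congr rfl
        intro k hk
        rw [Finset.mem_Ico] at hk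
        rw [haOut (k+1) (by omega), haOut k (by omega)]
      have e1 : (a' s : ℤ) = a s := haOut s (by omega)
      have e2 : (a' t : ℤ) = a t := haOut t (by omega)
      rw [hW, e1, e2]; exact hD2st
    · push_neg at hjs  -- s < j
      have hsi : i ≤ s := le_trans hiv hvs
      by_cases htj : t < j
      · -- 3a : both s,t in [i,j), window inside, nondecreasing
        have hW : Wsum a' s t = Wsum a s t := by
          apply Finset.sum_congr rfl
          intro k hk
          rw [Finset.mem_Ico] at hk
          rw [haIn (k+1) (by omega) (by omega), haIn k (by omega) (by omega)]
          congr 1; ring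
        have hWu : Wsum a s t = (a t : ℤ) - a s :=
          Wsum_of_up a s t (le_of_lt hst) (fun k h1 h2 => hup k (by omega) (by omega))
        have e1 : (a' s : ℤ) = (a s : ℤ) - 1 := haIn s hsi hjs
        have e2 : (a' t : ℤ) = (a t : ℤ) - 1 := haIn t (by omega) htj
        have hps : 1 ≤ a s := hpos s hsi hjs
        have hps' : (1 : ℤ) ≤ a s := by exact_mod_cast hps
        rw [hW, hWu, e1, e2]
        linarith
      · push_neg at htj  -- j ≤ t : 3b, special index j-1
        have hj1 : 1 ≤ j := by omega
        have hlt : Wsum a' s t < Wsum a s t := by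
          apply Finset.sum_lt_sum
          · intro k hk
            rw [Finset.mem_Ico] at hk
            by_cases hkj : k + 1 < j
            · rw [haIn (k+1) (by omega) hkj, haIn k (by omega) (by omega)]
              apply le_of_eq; congr 1; ring
            · by_cases hkj2 : k + 1 = j
              · have hd := hdesc k hkj2
                have e1 : (a' (k+1) : ℤ) = a (k+1) := haOut (k+1) (by omega)
                have e2 : (a' k : ℤ) = (a k : ℤ) - 1 := haIn k (by omega) (by omega)
                rw [e1, e2]
                have hdz : (a (k+1) : ℤ) - a k ≤ -1 := by
                  rw [hkj2]; push_cast; omega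
                rw [abs_of_nonpos (by omega), abs_of_nonpos (by omega)]
                omega
              · rw [haOut (k+1) (by omega), haOut k (by omega)]
          · refine ⟨j - 1, Finset.mem_Ico.mpr ⟨by omega, by omega⟩, ?_⟩
            have hjj : j - 1 + 1 = j := by omega
            have hd := hdesc (j-1) hjj
            have e1 : (a' (j-1+1) : ℤ) = a (j-1+1) := haOut (j-1+1) (by omega)
            have e2 : (a' (j-1) : ℤ) = (a (j-1) : ℤ) - 1 := haIn (j-1) (by omega) (by omega)
            rw [e1, e2]
            have hdz : (a (j-1+1) : ℤ) - a (j-1) ≤ -1 := by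
              rw [hjj]; push_cast; omega
            rw [abs_of_nonpos (by omega), abs_of_nonpos (by omega)]
            omega
        have e1 : (a' s : ℤ) = (a s : ℤ) - 1 := haIn s hsi hjs
        have e2 : (a' t : ℤ) = a t := haOut t (by omega)
        rw [e1, e2]
        omega
  · -- t ≤ v
    by_cases hti : t < i
    · -- unchanged
      have hW : Wsum a' s t = Wsum a s t := by
        apply Finset.sum_congr rfl
        intro k hk
        rw [Finset.mem_Ico] at hk
        rw [haOut (k+1) (by omega), haOut k (by omega)]
      have e1 : (a' s : ℤ) = a s := haOut s (by omega)
      have e2 : (a' t : ℤ) = a t := haOut t (by omega)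
      rw [hW, e1, e2]; exact hD2st
    · push_neg at hti  -- i ≤ t
      by_cases hsi : s < i
      · -- 2b : special index i-1
        have hi1 : 1 ≤ i := by omega
        have hlt : Wsum a' s t < Wsum a s t := by
          apply Finset.sum_lt_sum
          · intro k hk
            rw [Finset.mem_Ico] at hk
            by_cases hki : k + 1 < i
            · rw [haOut (k+1) (by omega), haOut k (by omega)]
            · by_cases hki2 : k + 1 = i
              · have hd := hasc k hki2
                have e1 : (a' (k+1) : ℤ) = (a (k+1) : ℤ) - 1 :=
                  haIn (k+1) (by omega) (by omega)
                have e2 : (a' k : ℤ) = a k := haOut k (by omega)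
                rw [e1, e2]
                have hdz : (1:ℤ) ≤ (a (k+1) : ℤ) - a k := by
                  rw [hki2]; push_cast; omega
                rw [abs_of_nonneg (by omega), abs_of_nonneg (by omega)]
                omega
              · -- i ≤ k
                rw [haIn (k+1) (by omega) (by omega), haIn k (by omega) (by omega)]
                apply le_of_eq; congr 1; ring
          · refine ⟨i - 1, Finset.mem_Ico.mpr ⟨by omega, by omega⟩, ?_⟩
            have hii : i - 1 + 1 = i := by omega
            have hd := hasc (i-1) hii
            have e1 : (a' (i-1+1) : ℤ) = (a (i-1+1) : ℤ) - 1 :=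
              haIn (i-1+1) (by omega) (by omega)
            have e2 : (a' (i-1) : ℤ) = a (i-1) := haOut (i-1) (by omega)
            rw [e1, e2]
            have hdz : (1:ℤ) ≤ (a (i-1+1) : ℤ) - a (i-1) := by
              rw [hii]; push_cast; omega
            rw [abs_of_nonneg (by omega), abs_of_nonneg (by omega)]
            omega
        have e1 : (a' s : ℤ) = a s := haOut s (by omega)
        have e2 : (a' t : ℤ) = (a t : ℤ) - 1 := haIn t hti (by omega)
        rw [e1, e2]
        omega
      · push_neg at hsi  -- i ≤ s : 2a
        have hW : Wsum a' s t = Wsum a s t := by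
          apply Finset.sum_congr rfl
          intro k hk
          rw [Finset.mem_Ico] at hk
          rw [haIn (k+1) (by omega) (by omega), haIn k (by omega) (by omega)]
          congr 1; ring
        have hWd : Wsum a s t = (a s : ℤ) - a t :=
          Wsum_of_down a s t (le_of_lt hst) (fun k h1 h2 => hdown k (by omega) (by omega))
        have e1 : (a' s : ℤ) = (a s : ℤ) - 1 := haIn s hsi (by omega)
        have e2 : (a' t : ℤ) = (a t : ℤ) - 1 := haIn t hti (by omega)
        have hpt : 1 ≤ a t := hpos t hti (by omega)
        have hpt' : (1 : ℤ) ≤ a t := by exact_mod_cast hpt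
        rw [hW, hWd, e1, e2]
        linarith

lemma AZ_zero_down (a : ℕ → ℕ) (u w : ℕ) (h : AZ a u w = 0) :
    ∀ k, u ≤ k → k < w → a (k+1) ≤ a k := by
  intro k h1 h2
  have hnn : ∀ x ∈ Finset.Ico u w, (0:ℤ) ≤ max ((a (x+1) : ℤ) - a x) 0 :=
    fun x _ => le_max_right _ _
  have := (Finset.sum_eq_zero_iff_of_nonneg hnn).mp h k (Finset.mem_Ico.mpr ⟨h1, h2⟩)
  have hle : (a (k+1) : ℤ) - a k ≤ 0 := by
    by_contra hgt
    push_neg at hgt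
    rw [max_eq_left (le_of_lt hgt)] at this
    omega
  omega

/-- Construction of the step position `j` for the `F`-shape subtraction. -/
lemma Fstep_j (r : ℕ) (I' : Set ℕ) (a : ℕ → ℕ) (hr : 2 ≤ r)
    (hq0 : sSup I' + 1 < r) (haR : 2 ≤ a (r-1))
    (hD3i : 2 * AZ a (sSup I') (r-1) ≤ (a (r-1) : ℤ)) :
    ∃ j, sSup I' < j ∧ j ≤ r-1 ∧
      (∀ k, j ≤ k → k ≤ r-1 → 2 ≤ a k) ∧
      (∀ k, sSup I' ≤ k → k < j → 1 ≤ a k) ∧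
      ((a (j-1) < a j) ∨ AZ a (sSup I') (r-1) = 0) := by
  set q0 := sSup I' with hq0def
  have hposQ : ∀ k, q0 ≤ k → k ≤ r-1 → 1 ≤ a k := by
    intro k h1 h2
    by_contra hz
    push_neg at hz
    have hz0 : a k = 0 := by omega
    have h3 : (a (r-1) : ℤ) - a k ≤ AZ a k (r-1) := net_le_AZ a k (r-1) h2
    have h4 : AZ a k (r-1) ≤ AZ a q0 (r-1) := AZ_mono a q0 k (r-1) h1
    have h5 : (0:ℤ) ≤ AZ a q0 (r-1) := AZ_nonneg _ _ _
    rw [hz0] at h3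
    push_cast at h3
    have haR' : (2:ℤ) ≤ (a (r-1) : ℤ) := by exact_mod_cast haR
    omega
  by_cases hA : AZ a q0 (r-1) = 0
  · -- j = q0 + 1
    have hdown := AZ_zero_down a q0 (r-1) hA
    refine ⟨q0 + 1, by omega, by omega, ?_, fun k h1 h2 => hposQ k h1 (by omega), Or.inr hA⟩
    intro k h1 h2
    have hchain := chain_down_ge a q0 (r-1) (fun m hm1 hm2 => hdown m hm1 (by omega)) k
      (by omega) h2
    omega
  · -- j = findGreatest
    set P : ℕ → Prop := fun k => q0 < k ∧ a (k-1) < a k with hP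
    have hA' : ∃ k0, q0 ≤ k0 ∧ k0 < r-1 ∧ a k0 < a (k0+1) := by
      by_contra hno
      push_neg at hno
      apply hA
      apply Finset.sum_eq_zero
      intro x hx
      rw [Finset.mem_Ico] at hx
      have := hno x hx.1 hx.2
      rw [max_eq_right (by push_cast; omega)]
    obtain ⟨k0, hk01, hk02, hk03⟩ := hA'
    set j := Nat.findGreatest P (r-1) with hj
    have hjge : k0 + 1 ≤ j :=
      Nat.le_findGreatest (by omega) ⟨by omega, by simpa using hk03⟩
    have hjle : j ≤ r-1 := Nat.findGreatest_le (r-1)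
    have hjspec : P j := Nat.findGreatest_spec (P := P) (m := k0 + 1) (by omega)
      ⟨by omega, by simpa using hk03⟩
    have hnoasc : ∀ k, j ≤ k → k + 1 ≤ r-1 → a (k+1) ≤ a k := by
      intro k h1 h2
      by_contra hgt
      push_neg at hgt
      have : ¬ P (k+1) := Nat.findGreatest_is_greatest (by omega) h2
      exact this ⟨by omega, by simpa using hgt⟩
    refine ⟨j, hjspec.1, hjle, ?_, fun k h1 h2 => hposQ k h1 (by omega), Or.inl hjspec.2⟩
    intro k h1 h2
    have hchain := chain_down_ge a j (r-1) hnoasc k h1 h2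
    omega

/-- `D2` preservation for the `F`-shape. -/
lemma subF_D2 (r : ℕ) (I' : Set ℕ) (a : ℕ → ℕ) (i j : ℕ)
    (hIq : ∀ u ∈ I', u ≤ sSup I')
    (hiq : i ≤ sSup I') (hqj : sSup I' < j)
    (hposIJ : ∀ k, i ≤ k → k < j → 1 ≤ a k)
    (hasc : ∀ k, k + 1 = i → a k < a i)
    (hdown : ∀ k, i ≤ k → k + 1 ≤ sSup I' → a (k+1) ≤ a k)
    (hD2 : D2 I' a) :
    D2 I' (fun k => a k - shF r i j k) := by
  intro s t hc
  obtain ⟨hs, ht, hst, hcons⟩ := hc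
  set a' : ℕ → ℕ := fun k => a k - shF r i j k with ha'
  have hsq : s ≤ sSup I' := hIq s hs
  have htq : t ≤ sSup I' := hIq t ht
  have haIn : ∀ k, i ≤ k → k ≤ sSup I' → (a' k : ℤ) = (a k : ℤ) - 1 := by
    intro k h1 h2
    have := hposIJ k h1 (by omega)
    simp only [ha', shF, if_pos (show i ≤ k ∧ k < j from ⟨h1, by omega⟩),
      if_neg (show ¬(j ≤ k ∧ k < r) by omega)]
    omega
  have haOut : ∀ k, k < i → (a' k : ℤ) = (a k : ℤ) := by
    intro k h
    simp only [ha', shF, if_neg (show ¬(i ≤ k ∧ k < j) by omega),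
      if_neg (show ¬(j ≤ k ∧ k < r) by omega)]
    omega
  have hD2st := hD2 s t ⟨hs, ht, hst, hcons⟩
  by_cases hti : t < i
  · have hW : Wsum a' s t = Wsum a s t := by
      apply Finset.sum_congr rfl
      intro k hk
      rw [Finset.mem_Ico] at hk
      rw [haOut (k+1) (by omega), haOut k (by omega)]
    have e1 : (a' s : ℤ) = a s := haOut s (by omega)
    have e2 : (a' t : ℤ) = a t := haOut t (by omega)
    rw [hW, e1, e2]; exact hD2st
  · push_neg at hti
    by_cases hsi : s < i
    · -- special index i-1
      have hi1 : 1 ≤ i := by omega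
      have hlt : Wsum a' s t < Wsum a s t := by
        apply Finset.sum_lt_sum
        · intro k hk
          rw [Finset.mem_Ico] at hk
          by_cases hki : k + 1 < i
          · rw [haOut (k+1) (by omega), haOut k (by omega)]
          · by_cases hki2 : k + 1 = i
            · have hd := hasc k hki2
              have e1 : (a' (k+1) : ℤ) = (a (k+1) : ℤ) - 1 :=
                haIn (k+1) (by omega) (by omega)
              have e2 : (a' k : ℤ) = a k := haOut k (by omega)
              rw [e1, e2]
              have hdz : (1:ℤ) ≤ (a (k+1) : ℤ) - a k := by
                rw [hki2]; push_cast; omega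
              rw [abs_of_nonneg (by omega), abs_of_nonneg (by omega)]
              omega
            · rw [haIn (k+1) (by omega) (by omega), haIn k (by omega) (by omega)]
              apply le_of_eq; congr 1; ring
        · refine ⟨i - 1, Finset.mem_Ico.mpr ⟨by omega, by omega⟩, ?_⟩
          have hii : i - 1 + 1 = i := by omega
          have hd := hasc (i-1) hii
          have e1 : (a' (i-1+1) : ℤ) = (a (i-1+1) : ℤ) - 1 :=
            haIn (i-1+1) (by omega) (by omega)
          have e2 : (a' (i-1) : ℤ) = a (i-1) := haOut (i-1) (by omega)
          rw [e1, e2]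
          have hdz : (1:ℤ) ≤ (a (i-1+1) : ℤ) - a (i-1) := by
            rw [hii]; push_cast; omega
          rw [abs_of_nonneg (by omega), abs_of_nonneg (by omega)]
          omega
      have e1 : (a' s : ℤ) = a s := haOut s (by omega)
      have e2 : (a' t : ℤ) = (a t : ℤ) - 1 := haIn t hti (by omega)
      rw [e1, e2]
      omega
    · push_neg at hsi
      have hW : Wsum a' s t = Wsum a s t := by
        apply Finset.sum_congr rfl
        intro k hk
        rw [Finset.mem_Ico] at hk
        rw [haIn (k+1) (by omega) (by omega), haIn k (by omega) (by omega)]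
        congr 1; ring
      have hWd : Wsum a s t = (a s : ℤ) - a t :=
        Wsum_of_down a s t (le_of_lt hst) (fun k h1 h2 => hdown k (by omega) (by omega))
      have e1 : (a' s : ℤ) = (a s : ℤ) - 1 := haIn s hsi (by omega)
      have e2 : (a' t : ℤ) = (a t : ℤ) - 1 := haIn t hti (by omega)
      have hpt : 1 ≤ a t := hposIJ t hti (by omega)
      have hpt' : (1 : ℤ) ≤ a t := by exact_mod_cast hpt
      rw [hW, hWd, e1, e2]
      linarith

/-- `D3` preservation for the `F`-shape. -/
lemma subF_D3 (r : ℕ) (I' : Set ℕ) (a : ℕ → ℕ) (i j : ℕ) (hr : 2 ≤ r)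
    (hiq : i ≤ sSup I') (hqj : sSup I' < j) (hjr : j ≤ r - 1)
    (hposIJ : ∀ k, i ≤ k → k < j → 1 ≤ a k)
    (hpos2 : ∀ k, j ≤ k → k ≤ r-1 → 2 ≤ a k)
    (hjasc : (a (j-1) < a j) ∨ AZ a (sSup I') (r-1) = 0)
    (hD3 : D3 r I' a) :
    D3 r I' (fun k => a k - shF r i j k) := by
  set a' : ℕ → ℕ := fun k => a k - shF r i j k with ha'
  obtain ⟨hdvd, hAZ⟩ := hD3
  have haC : ∀ k, i ≤ k → k < r → (a' k : ℤ) = (a k : ℤ) - (if k < j then 1 else 2) := by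
    intro k h1 h2
    by_cases hkj : k < j
    · have := hposIJ k h1 hkj
      simp only [ha', shF, if_pos (show i ≤ k ∧ k < j from ⟨h1, hkj⟩),
        if_neg (show ¬(j ≤ k ∧ k < r) by omega), if_pos hkj]
      omega
    · have := hpos2 k (by omega) (by omega)
      simp only [ha', shF, if_neg (show ¬(i ≤ k ∧ k < j) by omega),
        if_pos (show j ≤ k ∧ k < r from ⟨by omega, h2⟩), if_neg hkj]
      omega
  have haR : (a' (r-1) : ℤ) = (a (r-1) : ℤ) - 2 := by
    have := haC (r-1) (by omega) (by omega)
    rw [if_neg (by omega)] at this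
    exact this
  have haRn : a' (r-1) = a (r-1) - 2 := by
    have h2 := hpos2 (r-1) hjr (le_refl _)
    omega
  constructor
  · rw [haRn]
    omega
  · rcases hjasc with hjasc | hA0
    · -- AZ decreases by at least 1
      have hlt : AZ a' (sSup I') (r-1) < AZ a (sSup I') (r-1) := by
        apply Finset.sum_lt_sum
        · intro k hk
          rw [Finset.mem_Ico] at hk
          have e1 := haC (k+1) (by omega) (by omega)
          have e2 := haC k (by omega) (by omega)
          by_cases hkj : k + 1 < j
          · rw [e1, e2, if_pos hkj, if_pos (by omega)]
            apply le_of_eq; congr 1; ring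
          · by_cases hkj2 : k + 1 = j
            · rw [e1, e2, if_neg (by omega), if_pos (by omega)]
              apply max_le_max _ (le_refl _)
              omega
            · rw [e1, e2, if_neg (by omega), if_neg (by omega)]
              apply le_of_eq; congr 1; ring
        · refine ⟨j - 1, Finset.mem_Ico.mpr ⟨by omega, by omega⟩, ?_⟩
          have hjj : j - 1 + 1 = j := by omega
          have e1 := haC (j-1+1) (by omega) (by omega)
          have e2 := haC (j-1) (by omega) (by omega)
          rw [e1, e2, if_neg (by omega), if_pos (by omega)]
          have hdz : (1:ℤ) ≤ (a (j-1+1) : ℤ) - a (j-1) := by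
            rw [hjj]; push_cast; omega
          rw [max_eq_left (by omega), max_eq_left (by omega)]
          omega
      rw [haR]
      omega
    · -- nonincreasing tail: AZ stays 0
      have hdown := AZ_zero_down a (sSup I') (r-1) hA0
      have hz : AZ a' (sSup I') (r-1) = 0 := by
        apply AZ_of_down
        intro k h1 h2
        have e1 := haC (k+1) (by omega) (by omega)
        have e2 := haC k (by omega) (by omega)
        have hd := hdown k h1 h2
        -- conclude in ℕ
        have : (a' (k+1) : ℤ) ≤ (a' k : ℤ) := by
          rw [e1, e2]
          by_cases hkj : k + 1 < j
          · rw [if_pos hkj, if_pos (by omega)]; push_cast; omega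
          · by_cases hkj2 : k + 1 = j
            · rw [if_neg (by omega), if_pos (by omega)]; push_cast; omega
            · rw [if_neg (by omega), if_neg (by omega)]; push_cast; omega
        exact_mod_cast this
      rw [hz, haR]
      have h2 := hpos2 (r-1) hjr (le_refl _)
      have : (2:ℤ) ≤ (a (r-1) : ℤ) := by exact_mod_cast h2
      omega

lemma ISet_lt (r : ℕ) (lam : Wt r) : ∀ k ∈ ISet r lam, k < r := by
  intro k hk
  obtain ⟨h, _⟩ := hk
  exact h

lemma ISet_bdd (r : ℕ) (lam : Wt r) : BddAbove (ISet r lam) :=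
  ⟨r, fun x hx => le_of_lt (ISet_lt r lam x hx)⟩

lemma shE_le (a : ℕ → ℕ) (i j : ℕ) (hpos : ∀ k, i ≤ k → k < j → 1 ≤ a k) :
    ∀ k, shE i j k ≤ a k := by
  intro k
  by_cases h : i ≤ k ∧ k < j
  · rw [shE, if_pos h]; exact hpos k h.1 h.2
  · rw [shE, if_neg h]; exact Nat.zero_le _

/-- Main induction, case (i): `α_r ∈ Supp(λ)`. -/
lemma main_i (r : ℕ) (hr : 2 ≤ r) (lam : Wt r)
    (hne : (ISet r lam).Nonempty) (hqI : r - 1 ∈ ISet r lam) :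
    ∀ n (a : ℕ → ℕ), (∑ k ∈ Finset.range r, a k) = n → (∀ k, r ≤ k → a k = 0) →
      D1 (ISet r lam) a → D2 (ISet r lam) a →
      Tf r a ∈ AddSubmonoid.closure (PhiPosLam r lam) := by
  intro n
  induction n using Nat.strong_induction_on with
  | _ n ih =>
  intro a hsum ha0 hD1 hD2
  by_cases hz : ∀ k, k < r → a k = 0
  · rw [Tf_zero_fn r a hz]; exact zero_mem _
  · push_neg at hz
    have hIr := ISet_lt r lam
    have hq0 : sSup (ISet r lam) = r - 1 := by
      apply le_antisymm
      · exact csSup_le hne (fun b hb => by have := hIr b hb; omega)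
      · exact le_csSup (ISet_bdd r lam) hqI
    have htail : ∀ k, sSup (ISet r lam) ≤ k → a (k+1) ≤ a k := by
      intro k hk
      rw [ha0 (k+1) (by omega)]
      exact Nat.zero_le _
    obtain ⟨v, hvI, hav⟩ := exists_pos_at_I r (ISet r lam) a hne hIr ha0 hD1 hD2 htail
      (by obtain ⟨k, h1, h2⟩ := hz; exact ⟨k, h1, h2⟩)
    have hvr : v < r := hIr v hvI
    obtain ⟨i, j, hiv, hvj, hjr, hpos, hasc, hdesc, hdown, hup⟩ :=
      intervalStep r a ha0 v hvr hav
    have hble := shE_le a i j hpos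
    have hsplit : Tf r a = Tf r (shE i j) + Tf r (fun k => a k - shE i j k) :=
      Tf_split r a (shE i j) hble
    have hp0v : sInf (ISet r lam) ≤ v := Nat.sInf_le hvI
    have ha0' : ∀ k, r ≤ k → (fun k => a k - shE i j k) k = 0 := by
      intro k hk
      simp only
      rw [ha0 k hk]
      exact Nat.zero_sub _
    have hD1' : D1 (ISet r lam) (fun k => a k - shE i j k) := by
      apply sub_D1_param (ISet r lam) a _ i hD1 hasc
      · intro m h1 h2
        exact hpos m h1 (by omega)
      · intro m hm
        simp only [shE]
        by_cases h : i ≤ m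
        · rw [if_pos ⟨h, by omega⟩, if_pos h]
        · rw [if_neg (fun hc => h hc.1), if_neg h]
    have hD2' := subE_D2 (ISet r lam) a i j v hvI hiv hvj hpos hasc hdesc hdown hup hD2
    have hlt : (∑ k ∈ Finset.range r, (a k - shE i j k)) < n := by
      rw [← hsum]
      exact sum_lt_of_pos r a (shE i j) hble v hvr (by rw [shE, if_pos ⟨hiv, hvj⟩])
    rw [hsplit]
    exact add_mem
      (AddSubmonoid.subset_closure (mem_PhiPosLam_E r lam i j v (by omega) hjr hvI hiv hvj))
      (ih _ hlt _ rfl ha0' hD1' hD2')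

lemma shF_le (r : ℕ) (a : ℕ → ℕ) (i j : ℕ) (hij : i < j)
    (hposIJ : ∀ k, i ≤ k → k < j → 1 ≤ a k)
    (hpos2 : ∀ k, j ≤ k → k ≤ r-1 → 2 ≤ a k) :
    ∀ k, shF r i j k ≤ a k := by
  intro k
  by_cases h1 : i ≤ k ∧ k < j
  · rw [shF, if_pos h1, if_neg (by omega)]
    have := hposIJ k h1.1 h1.2
    omega
  · by_cases h2 : j ≤ k ∧ k < r
    · rw [shF, if_neg h1, if_pos h2]
      have := hpos2 k h2.1 (by omega)
      omega
    · rw [shF, if_neg h1, if_neg h2]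
      exact Nat.zero_le _

/-- Main induction, case (ii): `α_r ∉ Supp(λ)`. -/
lemma main_ii (r : ℕ) (hr : 2 ≤ r) (lam : Wt r)
    (hne : (ISet r lam).Nonempty) (hqN : r - 1 ∉ ISet r lam) :
    ∀ n (a : ℕ → ℕ), (∑ k ∈ Finset.range r, a k) = n → (∀ k, r ≤ k → a k = 0) →
      D1 (ISet r lam) a → D2 (ISet r lam) a → D3 r (ISet r lam) a →
      Tf r a ∈ AddSubmonoid.closure (PhiPosLongLam r lam) := by
  intro n
  induction n using Nat.strong_induction_on with
  | _ n ih =>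
  intro a hsum ha0 hD1 hD2 hD3
  by_cases hz : ∀ k, k < r → a k = 0
  · rw [Tf_zero_fn r a hz]; exact zero_mem _
  · push_neg at hz
    have hIr := ISet_lt r lam
    have hq0I : sSup (ISet r lam) ∈ ISet r lam := Nat.sSup_mem hne (ISet_bdd r lam)
    have hIq : ∀ u ∈ ISet r lam, u ≤ sSup (ISet r lam) :=
      fun u hu => le_csSup (ISet_bdd r lam) hu
    have hq0lt : sSup (ISet r lam) + 1 < r := by
      have h1 : sSup (ISet r lam) < r := hIr _ hq0I
      have h2 : sSup (ISet r lam) ≠ r - 1 := fun hc => hqN (hc ▸ hq0I)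
      omega
    by_cases hR : a (r-1) = 0
    · -- interval step
      have hAZ0 : AZ a (sSup (ISet r lam)) (r-1) = 0 := by
        have h1 := hD3.2
        have h2 := AZ_nonneg a (sSup (ISet r lam)) (r-1)
        rw [hR] at h1
        push_cast at h1
        omega
      have htail : ∀ k, sSup (ISet r lam) ≤ k → a (k+1) ≤ a k := by
        intro k hk
        rcases Nat.lt_or_ge k (r-1) with h | h
        · exact AZ_zero_down a _ _ hAZ0 k hk h
        · rw [ha0 (k+1) (by omega)]
          exact Nat.zero_le _
      obtain ⟨v, hvI, hav⟩ := exists_pos_at_I r (ISet r lam) a hne hIr ha0 hD1 hD2 htail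
        (by obtain ⟨k, h1, h2⟩ := hz; exact ⟨k, h1, h2⟩)
      have hvr : v < r := hIr v hvI
      have hvq : v ≤ sSup (ISet r lam) := hIq v hvI
      obtain ⟨i, j, hiv, hvj, hjr, hpos, hasc, hdesc, hdown, hup⟩ :=
        intervalStep r a ha0 v hvr hav
      have hjr1 : j ≤ r - 1 := by
        by_contra hgt
        push_neg at hgt
        have : 1 ≤ a (r-1) := hpos (r-1) (by omega) (by omega)
        omega
      have hble := shE_le a i j hpos
      have hsplit : Tf r a = Tf r (shE i j) + Tf r (fun k => a k - shE i j k) :=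
        Tf_split r a (shE i j) hble
      have ha0' : ∀ k, r ≤ k → (fun k => a k - shE i j k) k = 0 := by
        intro k hk
        simp only
        rw [ha0 k hk]
        exact Nat.zero_sub _
      have hD1' : D1 (ISet r lam) (fun k => a k - shE i j k) := by
        apply sub_D1_param (ISet r lam) a _ i hD1 hasc
        · intro m h1 h2
          have : sInf (ISet r lam) ≤ v := Nat.sInf_le hvI
          exact hpos m h1 (by omega)
        · intro m hm
          have : sInf (ISet r lam) ≤ v := Nat.sInf_le hvI
          simp only [shE]
          by_cases h : i ≤ m
          · rw [if_pos ⟨h, by omega⟩, if_pos h]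
          · rw [if_neg (fun hc => h hc.1), if_neg h]
      have hD2' := subE_D2 (ISet r lam) a i j v hvI hiv hvj hpos hasc hdesc hdown hup hD2
      have htail' := subE_tail (ISet r lam) a i j v hvI hiv hvj hpos hdesc htail hvq
      have hD3' : D3 r (ISet r lam) (fun k => a k - shE i j k) := by
        have hRE : a (r-1) - shE i j (r-1) = 0 := by
          rw [shE, if_neg (by omega), hR]
        constructor
        · simp only
          rw [hRE]
          omega
        · have hz' : AZ (fun k => a k - shE i j k) (sSup (ISet r lam)) (r-1) = 0 :=
            AZ_of_down _ _ _ (fun k h1 _ => htail' k h1)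
          simp only at hz' ⊢
          rw [hz', hRE]
          simp
      have hlt : (∑ k ∈ Finset.range r, (a k - shE i j k)) < n := by
        rw [← hsum]
        exact sum_lt_of_pos r a (shE i j) hble v hvr (by rw [shE, if_pos ⟨hiv, hvj⟩])
      rw [hsplit]
      exact add_mem
        (AddSubmonoid.subset_closure
          (mem_PhiPosLongLam_E r lam i j v (by omega) (by omega) hvI hiv hvj))
        (ih _ hlt _ rfl ha0' hD1' hD2' hD3')
    · -- F step
      have haR2 : 2 ≤ a (r-1) := by
        obtain ⟨hdvd, _⟩ := hD3
        omega
      obtain ⟨j, hqj, hjr, hpos2, hposM, hjasc⟩ :=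
        Fstep_j r (ISet r lam) a hr hq0lt haR2 hD3.2
      have haq0 : 1 ≤ a (sSup (ISet r lam)) := hposM _ (le_refl _) hqj
      obtain ⟨i, hiq, hasc, hdown, hposL⟩ := leftStep a (sSup (ISet r lam)) haq0
      have hposIJ : ∀ k, i ≤ k → k < j → 1 ≤ a k := by
        intro k h1 h2
        rcases le_or_gt k (sSup (ISet r lam)) with h | h
        · exact hposL k h1 h
        · exact hposM k (le_of_lt h) h2
      have hble := shF_le r a i j (by omega) hposIJ hpos2
      have hsplit : Tf r a = Tf r (shF r i j) + Tf r (fun k => a k - shF r i j k) :=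
        Tf_split r a (shF r i j) hble
      have ha0' : ∀ k, r ≤ k → (fun k => a k - shF r i j k) k = 0 := by
        intro k hk
        simp only
        rw [ha0 k hk]
        exact Nat.zero_sub _
      have hp0q : sInf (ISet r lam) ≤ sSup (ISet r lam) := Nat.sInf_le hq0I
      have hD1' : D1 (ISet r lam) (fun k => a k - shF r i j k) := by
        apply sub_D1_param (ISet r lam) a _ i hD1 hasc
        · intro m h1 h2
          exact hposL m h1 (by omega)
        · intro m hm
          simp only [shF]
          by_cases h : i ≤ m
          · rw [if_pos ⟨h, by omega⟩, if_neg (by omega), if_pos h]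
          · rw [if_neg (fun hc => h hc.1), if_neg (by omega), if_neg h]
      have hD2' := subF_D2 r (ISet r lam) a i j hIq hiq hqj hposIJ hasc hdown hD2
      have hD3' := subF_D3 r (ISet r lam) a i j hr hiq hqj hjr hposIJ hpos2
        (by rcases hjasc with h | h; exacts [Or.inl h, Or.inr h]) hD3
      have hlt : (∑ k ∈ Finset.range r, (a k - shF r i j k)) < n := by
        rw [← hsum]
        apply sum_lt_of_pos r a (shF r i j) hble (r-1) (by omega)
        rw [shF, if_neg (by omega), if_pos ⟨hjr, by omega⟩]
        omega
      rw [hsplit]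
      exact add_mem
        (AddSubmonoid.subset_closure
          (mem_PhiPosLongLam_F r lam i j (sSup (ISet r lam)) (by omega) (by omega) hq0I hiq))
        (ih _ hlt _ rfl ha0' hD1' hD2' hD3')

lemma mem_ISet_iff (r : ℕ) (lam : Wt r) (s : Fin r) :
    (s : ℕ) ∈ ISet r lam ↔ s ∈ SuppSet r lam := by
  constructor
  · rintro ⟨h, hs⟩
    simpa using hs
  · intro hs
    exact ⟨s.isLt, by simpa [Fin.eta] using hs⟩

lemma ISet_nonempty (r : ℕ) (lam : Wt r) (hne : (SuppSet r lam).Nonempty) :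
    (ISet r lam).Nonempty := by
  obtain ⟨w, hw⟩ := hne
  exact ⟨(w : ℕ), (mem_ISet_iff r lam w).mpr hw⟩

lemma ac_Tf (r : ℕ) (a : ℕ → ℕ) (ha0 : ∀ k, r ≤ k → a k = 0) (k : ℕ) :
    ac r (Tf r a) k = (a k : ℚ) := by
  rw [ac]
  split_ifs with h
  · rw [acoeff_Tf]
  · rw [ha0 k (by omega)]
    simp

lemma pmin_eq (r : ℕ) (lam : Wt r) (hne : (ISet r lam).Nonempty) :
    pmin r (SuppSet r lam) = sInf (ISet r lam) + 1 := by
  rw [pmin]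
  apply le_antisymm
  · apply Nat.sInf_le
    have hmem := Nat.sInf_mem hne
    obtain ⟨h, hs⟩ := hmem
    exact ⟨⟨sInf (ISet r lam), h⟩, hs, rfl⟩
  · apply le_csInf
    · have hmem := Nat.sInf_mem hne
      obtain ⟨h, hs⟩ := hmem
      exact ⟨sInf (ISet r lam) + 1, ⟨sInf (ISet r lam), h⟩, hs, rfl⟩
    · rintro b ⟨i, hi, rfl⟩
      have : (i : ℕ) ∈ ISet r lam := (mem_ISet_iff r lam i).mpr hi
      have := Nat.sInf_le this
      omega

lemma qmax_eq (r : ℕ) (lam : Wt r) (hne : (ISet r lam).Nonempty) :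
    qmax r (SuppSet r lam) = sSup (ISet r lam) + 1 := by
  rw [qmax]
  apply le_antisymm
  · apply csSup_le
    · have hmem := Nat.sSup_mem hne (ISet_bdd r lam)
      obtain ⟨h, hs⟩ := hmem
      exact ⟨sSup (ISet r lam) + 1, ⟨sSup (ISet r lam), h⟩, hs, rfl⟩
    · rintro b ⟨i, hi, rfl⟩
      have : (i : ℕ) ∈ ISet r lam := (mem_ISet_iff r lam i).mpr hi
      have := le_csSup (ISet_bdd r lam) this
      omega
  · apply le_csSup
    · exact ⟨r, by rintro b ⟨i, _, rfl⟩; exact i.isLt⟩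
    · have hmem := Nat.sSup_mem hne (ISet_bdd r lam)
      obtain ⟨h, hs⟩ := hmem
      exact ⟨⟨sSup (ISet r lam), h⟩, hs, rfl⟩

lemma condC1_iff (r : ℕ) (lam : Wt r) (hne : (ISet r lam).Nonempty)
    (a : ℕ → ℕ) (ha0 : ∀ k, r ≤ k → a k = 0) :
    CondC1 r (SuppSet r lam) (Tf r a) ↔ D1 (ISet r lam) a := by
  rw [CondC1]
  constructor
  · intro h k l hkl hlp
    have := h k l hkl (by rw [pmin_eq r lam hne]; omega)
    rw [ac_Tf r a ha0, ac_Tf r a ha0] at this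
    exact_mod_cast this
  · intro h k l hkl hlp
    rw [pmin_eq r lam hne] at hlp
    rw [ac_Tf r a ha0, ac_Tf r a ha0]
    exact_mod_cast h k l hkl (by omega)

lemma wsum_cast (r : ℕ) (a : ℕ → ℕ) (ha0 : ∀ k, r ≤ k → a k = 0) (s t : ℕ) :
    (∑ i ∈ Finset.Ico s t, |ac r (Tf r a) (i+1) - ac r (Tf r a) i|)
      = ((Wsum a s t : ℤ) : ℚ) := by
  rw [Wsum]
  push_cast
  apply Finset.sum_congr rfl
  intro k _
  rw [ac_Tf r a ha0, ac_Tf r a ha0]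

lemma condC2_iff (r : ℕ) (lam : Wt r)
    (a : ℕ → ℕ) (ha0 : ∀ k, r ≤ k → a k = 0) :
    CondC2 r (SuppSet r lam) (Tf r a) ↔ D2 (ISet r lam) a := by
  rw [CondC2]
  constructor
  · intro h s t hc
    obtain ⟨hs, ht, hst, hcons⟩ := hc
    have hsr : s < r := ISet_lt r lam s hs
    have htr : t < r := ISet_lt r lam t ht
    have key := h ⟨s, hsr⟩ ⟨t, htr⟩ (by rw [← mem_ISet_iff]; exact hs)
      (by rw [← mem_ISet_iff]; exact ht) (Fin.mk_lt_mk.mpr hst) ?_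
    · rw [wsum_cast r a ha0, acoeff_Tf, acoeff_Tf] at key
      exact_mod_cast key
    · intro u h1 h2 hu
      have huI : (u : ℕ) ∈ ISet r lam := (mem_ISet_iff r lam u).mpr hu
      exact hcons (u : ℕ) huI (Fin.lt_def.mp h1) (Fin.lt_def.mp h2)
  · intro h s t hs ht hst hmid
    have hc : Consec (ISet r lam) (s : ℕ) (t : ℕ) := by
      refine ⟨(mem_ISet_iff r lam s).mpr hs, (mem_ISet_iff r lam t).mpr ht,
        Fin.lt_def.mp hst, ?_⟩
      intro u hu h1 h2
      have hur : u < r := ISet_lt r lam u hu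
      refine hmid ⟨u, hur⟩ (Fin.lt_def.mpr h1) (Fin.lt_def.mpr h2) ?_
      rw [← mem_ISet_iff]
      exact hu
    have key := h (s : ℕ) (t : ℕ) hc
    rw [wsum_cast r a ha0, acoeff_Tf, acoeff_Tf]
    exact_mod_cast key

lemma evenQ_cast (n : ℕ) : EvenQ (n : ℚ) ↔ 2 ∣ n := by
  constructor
  · rintro ⟨m, hm⟩
    have : (n : ℤ) = 2 * m := by exact_mod_cast hm
    have h2 : (2 : ℤ) ∣ (n : ℤ) := ⟨m, this⟩
    exact_mod_cast h2
  · rintro ⟨c, hc⟩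
    exact ⟨(c : ℤ), by rw [hc]; push_cast; ring⟩

lemma az_cast (r : ℕ) (a : ℕ → ℕ) (ha0 : ∀ k, r ≤ k → a k = 0) (u w : ℕ) :
    (∑ i ∈ Finset.Ico u w,
        if ac r (Tf r a) i < ac r (Tf r a) (i+1)
        then ac r (Tf r a) (i+1) - ac r (Tf r a) i else 0)
      = ((AZ a u w : ℤ) : ℚ) := by
  rw [AZ]
  push_cast
  apply Finset.sum_congr rfl
  intro k _
  rw [ac_Tf r a ha0, ac_Tf r a ha0]
  by_cases h : a k < a (k+1)
  · rw [if_pos (show (a k : ℚ) < a (k+1) by exact_mod_cast h),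
      max_eq_left (sub_nonneg.mpr (show (a k : ℚ) ≤ a (k+1) by exact_mod_cast h.le))]
  · rw [if_neg (show ¬ (a k : ℚ) < a (k+1) by exact_mod_cast h),
      max_eq_right (sub_nonpos.mpr (show (a (k+1) : ℚ) ≤ a k by exact_mod_cast not_lt.mp h))]

lemma condC3_iff (r : ℕ) (lam : Wt r) (hne : (ISet r lam).Nonempty)
    (a : ℕ → ℕ) (ha0 : ∀ k, r ≤ k → a k = 0) :
    CondC3 r (SuppSet r lam) (Tf r a) ↔
      (sSup (ISet r lam) + 1 < r → D3 r (ISet r lam) a) := by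
  rw [CondC3, qmax_eq r lam hne]
  constructor
  · intro h hq
    obtain ⟨he, hineq⟩ := h hq
    constructor
    · rw [ac_Tf r a ha0] at he
      exact (evenQ_cast _).mp he
    · rw [show sSup (ISet r lam) + 1 - 1 = sSup (ISet r lam) by omega,
        az_cast r a ha0, ac_Tf r a ha0] at hineq
      exact_mod_cast hineq
  · intro h hq
    obtain ⟨he, hineq⟩ := h hq
    constructor
    · rw [ac_Tf r a ha0]
      exact (evenQ_cast _).mpr he
    · rw [show sSup (ISet r lam) + 1 - 1 = sSup (ISet r lam) by omega,
        az_cast r a ha0, ac_Tf r a ha0]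
      exact_mod_cast hineq

lemma shE_ha0 (i j r : ℕ) (hjr : j ≤ r) : ∀ k, r ≤ k → shE i j k = 0 := by
  intro k hk
  rw [shE, if_neg (by omega)]

lemma shF_ha0 (i j r : ℕ) (hjr : j ≤ r) : ∀ k, r ≤ k → shF r i j k = 0 := by
  intro k hk
  rw [shF, if_neg (by omega), if_neg (by omega)]

lemma shE_D1 (I' : Set ℕ) (i j v : ℕ) (hvI : v ∈ I') (hiv : i ≤ v) (hvj : v < j) :
    D1 I' (shE i j) := by
  intro k l hkl hlp
  have hpv : sInf I' ≤ v := Nat.sInf_le hvI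
  by_cases hki : i ≤ k
  · rw [shE, if_pos ⟨hki, by omega⟩, shE, if_pos ⟨by omega, by omega⟩]
  · rw [shE, if_neg (by omega)]
    exact Nat.zero_le _

lemma shF_D1 (r : ℕ) (I' : Set ℕ) (i j : ℕ) (hij : i < j) (hp0 : sInf I' < r) :
    D1 I' (shF r i j) := by
  intro k l hkl hlp
  have hlr : l < r := by omega
  rw [shF, shF]
  by_cases h1 : i ≤ k ∧ k < j
  · rw [if_pos h1, if_neg (by omega)]
    by_cases h2 : l < j
    · rw [if_pos ⟨by omega, h2⟩, if_neg (by omega)]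
    · rw [if_neg (by omega), if_pos ⟨by omega, hlr⟩]
      omega
  · rw [if_neg h1]
    by_cases h2 : j ≤ k ∧ k < r
    · rw [if_pos h2, if_neg (by omega), if_pos ⟨by omega, hlr⟩]
    · rw [if_neg h2]
      exact Nat.zero_le _

lemma shE_D2 (I' : Set ℕ) (i j v : ℕ) (hvI : v ∈ I') (hiv : i ≤ v) (hvj : v < j) :
    D2 I' (shE i j) := by
  intro s t hc
  obtain ⟨hs, ht, hst, hcons⟩ := hc
  have hside : v ≤ s ∨ t ≤ v := by
    by_contra hcontra
    push_neg at hcontra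
    exact hcons v hvI (by omega) (by omega)
  have hval : ∀ k, (shE i j k : ℤ) = if i ≤ k ∧ k < j then 1 else 0 := by
    intro k
    rw [shE]
    split_ifs <;> simp
  have hnn : (0:ℤ) ≤ (shE i j s : ℤ) + shE i j t := by positivity
  rcases hside with hvs | hts
  · -- v ≤ s, so i ≤ s
    have hsi : i ≤ s := le_trans hiv hvs
    by_cases hjs : j ≤ s
    · have hW : Wsum (shE i j) s t = 0 := by
        apply Finset.sum_eq_zero
        intro k hk
        rw [Finset.mem_Ico] at hk
        rw [hval, hval, if_neg (by omega), if_neg (by omega)]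
        simp
      rw [hW]; exact hnn
    · push_neg at hjs
      by_cases htj : t < j
      · have hW : Wsum (shE i j) s t = 0 := by
          apply Finset.sum_eq_zero
          intro k hk
          rw [Finset.mem_Ico] at hk
          rw [hval, hval, if_pos ⟨by omega, by omega⟩, if_pos ⟨by omega, by omega⟩]
          simp
        rw [hW]; exact hnn
      · push_neg at htj
        have hW : Wsum (shE i j) s t ≤ 1 := by
          have hle : Wsum (shE i j) s t ≤
              ∑ k ∈ Finset.Ico s t, (if k = j - 1 then (1:ℤ) else 0) := by
            apply Finset.sum_le_sum
            intro k hk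
            rw [Finset.mem_Ico] at hk
            by_cases hkj : k + 1 < j
            · rw [hval, hval, if_pos ⟨by omega, hkj⟩, if_pos ⟨by omega, by omega⟩,
                if_neg (by omega)]
              simp
            · by_cases hkj2 : k + 1 = j
              · rw [hval, hval, if_neg (by omega), if_pos ⟨by omega, by omega⟩,
                  if_pos (by omega)]
                simp
              · rw [hval, hval, if_neg (by omega), if_neg (by omega), if_neg (by omega)]
                simp
          refine le_trans hle ?_
          rw [Finset.sum_ite_eq' (Finset.Ico s t) (j-1) (fun _ => (1:ℤ))]
          split_ifs <;> omega
        have he : (shE i j s : ℤ) = 1 := by rw [hval, if_pos ⟨hsi, hjs⟩]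
        have he2 : (0:ℤ) ≤ (shE i j t : ℤ) := by positivity
        omega
  · -- t ≤ v, so t < j
    have htj : t < j := by omega
    by_cases hti : t < i
    · have hW : Wsum (shE i j) s t = 0 := by
        apply Finset.sum_eq_zero
        intro k hk
        rw [Finset.mem_Ico] at hk
        rw [hval, hval, if_neg (by omega), if_neg (by omega)]
        simp
      rw [hW]; exact hnn
    · push_neg at hti
      by_cases hsi : i ≤ s
      · have hW : Wsum (shE i j) s t = 0 := by
          apply Finset.sum_eq_zero
          intro k hk
          rw [Finset.mem_Ico] at hk
          rw [hval, hval, if_pos ⟨by omega, by omega⟩, if_pos ⟨by omega, by omega⟩]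
          simp
        rw [hW]; exact hnn
      · push_neg at hsi
        have hW : Wsum (shE i j) s t ≤ 1 := by
          have hle : Wsum (shE i j) s t ≤
              ∑ k ∈ Finset.Ico s t, (if k = i - 1 then (1:ℤ) else 0) := by
            apply Finset.sum_le_sum
            intro k hk
            rw [Finset.mem_Ico] at hk
            by_cases hki : k + 1 < i
            · rw [hval, hval, if_neg (by omega), if_neg (by omega), if_neg (by omega)]
              simp
            · by_cases hki2 : k + 1 = i
              · rw [hval, hval, if_pos ⟨by omega, by omega⟩, if_neg (by omega),
                  if_pos (by omega)]
                simp
              · rw [hval, hval, if_pos ⟨by omega, by omega⟩, if_pos ⟨by omega, by omega⟩,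
                  if_neg (by omega)]
                simp
          refine le_trans hle ?_
          rw [Finset.sum_ite_eq' (Finset.Ico s t) (i-1) (fun _ => (1:ℤ))]
          split_ifs <;> omega
        have he : (shE i j t : ℤ) = 1 := by rw [hval, if_pos ⟨hti, htj⟩]
        have he2 : (0:ℤ) ≤ (shE i j s : ℤ) := by positivity
        omega

lemma shF_D2 (r : ℕ) (I' : Set ℕ) (i j : ℕ) (hij : i < j) (hIr : ∀ k ∈ I', k < r) :
    D2 I' (shF r i j) := by
  intro s t hc
  obtain ⟨hs, ht, hst, hcons⟩ := hc
  have htr : t < r := hIr t ht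
  have hW : Wsum (shF r i j) s t = (shF r i j t : ℤ) - shF r i j s := by
    apply Wsum_of_up
    · omega
    · intro k h1 h2
      rw [shF, shF]
      by_cases hc1 : i ≤ k ∧ k < j
      · by_cases hc2 : k + 1 < j
        · rw [if_pos hc1, if_neg (by omega), if_pos ⟨by omega, hc2⟩, if_neg (by omega)]
        · rw [if_pos hc1, if_neg (by omega), if_neg (by omega), if_pos ⟨by omega, by omega⟩]
          omega
      · by_cases hc3 : j ≤ k ∧ k < r
        · rw [if_neg hc1, if_pos hc3, if_neg (by omega), if_pos ⟨by omega, by omega⟩]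
        · rw [if_neg hc1, if_neg hc3]
          simp
  rw [hW]
  have : (0:ℤ) ≤ (shF r i j s : ℤ) := by positivity
  omega

lemma shE_D3 (r : ℕ) (I' : Set ℕ) (i j : ℕ) (hr : 2 ≤ r) (hiq : i ≤ sSup I')
    (hjr : j ≤ r - 1) :
    D3 r I' (shE i j) := by
  have hRE : shE i j (r-1) = 0 := by
    rw [shE, if_neg (by omega)]
  constructor
  · rw [hRE]
    exact dvd_zero 2
  · have hz : AZ (shE i j) (sSup I') (r-1) = 0 := by
      apply AZ_of_down
      intro k h1 h2
      rw [shE, shE]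
      by_cases hc1 : k + 1 < j
      · rw [if_pos ⟨by omega, hc1⟩, if_pos ⟨by omega, by omega⟩]
      · rw [if_neg (by omega)]
        exact Nat.zero_le _
    rw [hz, hRE]
    simp

lemma shF_D3 (r : ℕ) (I' : Set ℕ) (i j : ℕ) (hr : 2 ≤ r) (hiq : i ≤ sSup I')
    (h0j : 1 ≤ j) (hjr : j ≤ r - 1) :
    D3 r I' (shF r i j) := by
  have hRE : shF r i j (r-1) = 2 := by
    rw [shF, if_neg (by omega), if_pos ⟨hjr, by omega⟩]
  constructor
  · rw [hRE]
  · have hz : AZ (shF r i j) (sSup I') (r-1) ≤ 1 := by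
      have hle : AZ (shF r i j) (sSup I') (r-1) ≤
          ∑ k ∈ Finset.Ico (sSup I') (r-1), (if k = j - 1 then (1:ℤ) else 0) := by
        apply Finset.sum_le_sum
        intro k hk
        rw [Finset.mem_Ico] at hk
        have hik : i ≤ k := by omega
        have hval : ∀ m, i ≤ m → m < r → (shF r i j m : ℤ) = if m < j then 1 else 2 := by
          intro m h1 h2
          rw [shF]
          by_cases hc : m < j
          · rw [if_pos ⟨h1, hc⟩, if_neg (by omega), if_pos hc]
            simp
          · rw [if_neg (by omega), if_pos ⟨by omega, h2⟩, if_neg hc]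
            simp
        rw [hval (k+1) (by omega) (by omega), hval k (by omega) (by omega)]
        by_cases hc1 : k + 1 < j
        · rw [if_pos hc1, if_pos (by omega), if_neg (by omega)]
          simp
        · by_cases hc2 : k + 1 = j
          · rw [if_neg (by omega), if_pos (by omega), if_pos (by omega)]
            simp
          · rw [if_neg (by omega), if_neg (by omega), if_neg (by omega)]
            simp
      refine le_trans hle ?_
      rw [Finset.sum_ite_eq' (Finset.Ico (sSup I') (r-1)) (j-1) (fun _ => (1:ℤ))]
      split_ifs <;> omega
    rw [hRE]
    omega

lemma ac_add (r : ℕ) (τ σ : Wt r) (k : ℕ) : ac r (τ + σ) k = ac r τ k + ac r σ k := by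
  rw [ac, ac, ac]
  split_ifs with h
  · exact acoeff_add r τ σ _
  · ring

lemma ac_zero (r : ℕ) (k : ℕ) : ac r (0 : Wt r) k = 0 := by
  rw [ac]
  split_ifs with h
  · exact acoeff_zero r _
  · rfl

lemma ifpos_add_le (x1 x2 y1 y2 : ℚ) :
    (if x1 + x2 < y1 + y2 then (y1+y2) - (x1+x2) else 0) ≤
      (if x1 < y1 then y1 - x1 else 0) + (if x2 < y2 then y2 - x2 else 0) := by
  split_ifs <;> linarith

lemma xi_zero (r : ℕ) (lam : Wt r) : (0 : Wt r) ∈ XiSet r lam := by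
  refine ⟨zero_mem _, ?_, ?_, ?_⟩
  · intro i j hij hjp
    rw [ac_zero, ac_zero]
  · intro s t hs ht hst hmid
    have h0 : ∀ i ∈ Finset.Ico (s:ℕ) (t:ℕ), |ac r (0 : Wt r) (i+1) - ac r (0 : Wt r) i| = 0 := by
      intro i _
      rw [ac_zero, ac_zero]
      simp
    rw [Finset.sum_congr rfl h0, Finset.sum_const, acoeff_zero, acoeff_zero]
    simp
  · intro hq
    constructor
    · exact ⟨0, by rw [ac_zero]; ring⟩
    · have h0 : ∀ i ∈ Finset.Ico (qmax r (SuppSet r lam) - 1) (r-1),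
          (if ac r (0 : Wt r) i < ac r (0 : Wt r) (i+1)
           then ac r (0 : Wt r) (i+1) - ac r (0 : Wt r) i else 0) = 0 := by
        intro i _
        rw [ac_zero, ac_zero]
        simp
      rw [Finset.sum_congr rfl h0, Finset.sum_const, ac_zero]
      simp

lemma xi_add (r : ℕ) (lam : Wt r) (τ σ : Wt r) (hτ : τ ∈ XiSet r lam)
    (hσ : σ ∈ XiSet r lam) : τ + σ ∈ XiSet r lam := by
  obtain ⟨hN1, hC11, hC21, hC31⟩ := hτ
  obtain ⟨hN2, hC12, hC22, hC32⟩ := hσ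
  refine ⟨add_mem hN1 hN2, ?_, ?_, ?_⟩
  · intro i j hij hjp
    rw [ac_add, ac_add]
    exact add_le_add (hC11 i j hij hjp) (hC12 i j hij hjp)
  · intro s t hs ht hst hmid
    have hle : (∑ i ∈ Finset.Ico (s:ℕ) (t:ℕ), |ac r (τ + σ) (i+1) - ac r (τ + σ) i|) ≤
        (∑ i ∈ Finset.Ico (s:ℕ) (t:ℕ), |ac r τ (i+1) - ac r τ i|) +
        (∑ i ∈ Finset.Ico (s:ℕ) (t:ℕ), |ac r σ (i+1) - ac r σ i|) := by
      rw [← Finset.sum_add_distrib]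
      apply Finset.sum_le_sum
      intro k _
      rw [ac_add, ac_add]
      calc |ac r τ (k+1) + ac r σ (k+1) - (ac r τ k + ac r σ k)|
          = |(ac r τ (k+1) - ac r τ k) + (ac r σ (k+1) - ac r σ k)| := by ring_nf
        _ ≤ _ := abs_add_le _ _
    have h1 := hC21 s t hs ht hst hmid
    have h2 := hC22 s t hs ht hst hmid
    rw [acoeff_add]
    rw [acoeff_add]
    linarith
  · intro hq
    obtain ⟨⟨m1, hm1⟩, hi1⟩ := hC31 hq
    obtain ⟨⟨m2, hm2⟩, hi2⟩ := hC32 hq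
    constructor
    · exact ⟨m1 + m2, by rw [ac_add, hm1, hm2]; push_cast; ring⟩
    · have hle : (∑ i ∈ Finset.Ico (qmax r (SuppSet r lam) - 1) (r-1),
          (if ac r (τ+σ) i < ac r (τ+σ) (i+1) then ac r (τ+σ) (i+1) - ac r (τ+σ) i else 0)) ≤
          (∑ i ∈ Finset.Ico (qmax r (SuppSet r lam) - 1) (r-1),
            (if ac r τ i < ac r τ (i+1) then ac r τ (i+1) - ac r τ i else 0)) +
          (∑ i ∈ Finset.Ico (qmax r (SuppSet r lam) - 1) (r-1),
            (if ac r σ i < ac r σ (i+1) then ac r σ (i+1) - ac r σ i else 0)) := by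
        rw [← Finset.sum_add_distrib]
        apply Finset.sum_le_sum
        intro k _
        rw [ac_add, ac_add]
        exact ifpos_add_le _ _ _ _
      rw [ac_add]
      linarith

lemma Xi_shE (r : ℕ) (lam : Wt r) (hr : 2 ≤ r) (hne : (ISet r lam).Nonempty)
    (i j v : ℕ) (hvI : v ∈ ISet r lam) (hiv : i ≤ v) (hvj : v < j) (hjr : j ≤ r)
    (hD3c : sSup (ISet r lam) + 1 < r → j ≤ r - 1) :
    Tf r (shE i j) ∈ XiSet r lam := by
  have ha0 := shE_ha0 i j r hjr
  refine ⟨Tf_mem_NDelta r _, ?_, ?_, ?_⟩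
  · exact (condC1_iff r lam hne _ ha0).mpr (shE_D1 (ISet r lam) i j v hvI hiv hvj)
  · exact (condC2_iff r lam _ ha0).mpr (shE_D2 (ISet r lam) i j v hvI hiv hvj)
  · refine (condC3_iff r lam hne _ ha0).mpr ?_
    intro hq
    exact shE_D3 r (ISet r lam) i j hr
      (le_trans hiv (le_csSup (ISet_bdd r lam) hvI)) (hD3c hq)

lemma Xi_shF (r : ℕ) (lam : Wt r) (hr : 2 ≤ r) (hne : (ISet r lam).Nonempty)
    (i j v : ℕ) (hvI : v ∈ ISet r lam) (hiv : i ≤ v) (hij : i < j) (hjr : j < r)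
    (hD3c : sSup (ISet r lam) + 1 < r → j ≤ r - 1) :
    Tf r (shF r i j) ∈ XiSet r lam := by
  have ha0 := shF_ha0 i j r (le_of_lt hjr)
  have hiq : i ≤ sSup (ISet r lam) := le_trans hiv (le_csSup (ISet_bdd r lam) hvI)
  have hp0r : sInf (ISet r lam) < r := by
    have h1 := Nat.sInf_mem hne
    exact ISet_lt r lam _ h1
  refine ⟨Tf_mem_NDelta r _, ?_, ?_, ?_⟩
  · exact (condC1_iff r lam hne _ ha0).mpr (shF_D1 r (ISet r lam) i j hij hp0r)
  · exact (condC2_iff r lam _ ha0).mpr (shF_D2 r (ISet r lam) i j hij (ISet_lt r lam))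
  · refine (condC3_iff r lam hne _ ha0).mpr ?_
    intro hq
    exact shF_D3 r (ISet r lam) i j hr hiq (by omega) (hD3c hq)

theorem stmt16' (r : ℕ) (hr : 2 ≤ r) (lam : Wt r)
    (hlw : IsWeight r lam) (hld : IsDominant r lam)
    (hne : (SuppSet r lam).Nonempty) :
    ((⟨r - 1, Nat.sub_lt (by omega) Nat.one_pos⟩ : Fin r) ∈ SuppSet r lam →
        XiSet r lam = (AddSubmonoid.closure (PhiPosLam r lam) : Set (Wt r))) ∧
    ((⟨r - 1, Nat.sub_lt (by omega) Nat.one_pos⟩ : Fin r) ∉ SuppSet r lam →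
        XiSet r lam = (AddSubmonoid.closure (PhiPosLongLam r lam) : Set (Wt r))) := by
  have hneI : (ISet r lam).Nonempty := ISet_nonempty r lam hne
  constructor
  · intro hq
    have hqI : r - 1 ∈ ISet r lam := ⟨by omega, hq⟩
    have hq0 : sSup (ISet r lam) + 1 = r := by
      have h1 : sSup (ISet r lam) = r - 1 :=
        le_antisymm (csSup_le hneI (fun b hb => by have := ISet_lt r lam b hb; omega))
          (le_csSup (ISet_bdd r lam) hqI)
      omega
    apply Set.Subset.antisymm
    · intro τ hτ
      obtain ⟨hND, h1, h2, h3⟩ := hτ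
      obtain ⟨a, ha0, rfl⟩ := mem_NDelta_exists_Tf r τ hND
      exact main_i r hr lam hneI hqI _ a rfl ha0 ((condC1_iff r lam hneI a ha0).mp h1)
        ((condC2_iff r lam a ha0).mp h2)
    · intro τ hτ
      refine AddSubmonoid.closure_induction (motive := fun x _ => x ∈ XiSet r lam) ?_ ?_ ?_ hτ
      · intro x hx
        rcases phiPosLam_cases r lam x hx with
          ⟨i, j, v, h1, h2, h3, h4, h5, rfl⟩ | ⟨i, j, v, h1, h2, h3, h4, h5, rfl⟩
        · exact Xi_shE r lam hr hneI i j v h5 h1 h2 h3 (fun hc => absurd hc (by omega))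
        · exact Xi_shF r lam hr hneI i j v h5 h1 h3 h4 (fun hc => absurd hc (by omega))
      · exact xi_zero r lam
      · intro x y _ _ hx hy
        exact xi_add r lam x y hx hy
  · intro hqn
    have hqN : r - 1 ∉ ISet r lam := by
      rintro ⟨h, hs⟩
      exact hqn hs
    have hqlt : sSup (ISet r lam) + 1 < r := by
      have h1 : sSup (ISet r lam) ∈ ISet r lam := Nat.sSup_mem hneI (ISet_bdd r lam)
      have h2 := ISet_lt r lam _ h1
      have h3 : sSup (ISet r lam) ≠ r - 1 := fun hc => hqN (hc ▸ h1)
      omega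
    apply Set.Subset.antisymm
    · intro τ hτ
      obtain ⟨hND, h1, h2, h3⟩ := hτ
      obtain ⟨a, ha0, rfl⟩ := mem_NDelta_exists_Tf r τ hND
      exact main_ii r hr lam hneI hqN _ a rfl ha0 ((condC1_iff r lam hneI a ha0).mp h1)
        ((condC2_iff r lam a ha0).mp h2) ((condC3_iff r lam hneI a ha0).mp h3 hqlt)
    · intro τ hτ
      refine AddSubmonoid.closure_induction (motive := fun x _ => x ∈ XiSet r lam) ?_ ?_ ?_ hτ
      · intro x hx
        rcases phiPosLongLam_cases r lam x hx with
          ⟨i, j, v, h1, h2, h3, h4, h5, rfl⟩ | ⟨i, j, v, h1, h2, h3, h4, h5, rfl⟩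
        · exact Xi_shE r lam hr hneI i j v h5 h1 h2 (by omega) (fun _ => by omega)
        · exact Xi_shF r lam hr hneI i j v h5 h1 h3 h4 (fun _ => by omega)
      · exact xi_zero r lam
      · intro x y _ _ hx hy
        exact xi_add r lam x y hx hy

end Proofs16

/-- Corollary 3.3: description of `Ξ(λ)` as `ℕΦ⁺(λ)` resp. `ℕΦ⁺_l(λ)`. -/
theorem stmt16 (r : ℕ) (hr : 2 ≤ r) (lam : Wt r)
    (hlw : IsWeight r lam) (hld : IsDominant r lam)
    (hne : (SuppSet r lam).Nonempty) :
    ((⟨r - 1, by omega⟩ : Fin r) ∈ SuppSet r lam →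
        XiSet r lam = (AddSubmonoid.closure (PhiPosLam r lam) : Set (Wt r))) ∧
    ((⟨r - 1, by omega⟩ : Fin r) ∉ SuppSet r lam →
        XiSet r lam = (AddSubmonoid.closure (PhiPosLongLam r lam) : Set (Wt r))) := by
  exact stmt16' r hr lam hlw hld hne

end SpinOdd
end
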